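/- arXiv:1708.09774 — 5 statements merged into one kernel-verified Lean document; each statement's English description precedes it below -/
import Mathlib

section
/- If a graph G has a vertex v adjacent to two or more vertices of degree one (a strong stem), then G has no pair of disjoint dominating sets D, D' with a perfect matching between them in G. -/
open SimpleGraph

variable {V : Type*}

/-- `D` is a dominating set of `G`. -/
def IsDomSet (G : SimpleGraph V) (D : Set V) : Prop :=
  ∀ v, v ∉ D → ∃ u ∈ D, G.Adj u v

/-- `D, D'` are disjoint dominating sets with a perfect matching between them
(each vertex of `D` matched to a distinct adjacent vertex of `D'`). -/
def IsSwapPair (G : SimpleGraph V) (D D' : Set V) : Prop :=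
  IsDomSet G D ∧ IsDomSet G D' ∧ Disjoint D D' ∧
    ∃ f : D ≃ D', ∀ x : D, G.Adj x (f x)

/-- `DD_m(G)`: minimum cardinality of a swap set (`⊤` if none exists). -/
noncomputable def DDm (G : SimpleGraph V) : ℕ∞ :=
  sInf {n : ℕ∞ | ∃ D D' : Set V, IsSwapPair G D D' ∧ (D.ncard : ℕ∞) = n}

/-- domination number -/
noncomputable def domNum (G : SimpleGraph V) : ℕ :=
  sInf {n : ℕ | ∃ D : Set V, IsDomSet G D ∧ D.ncard = n}

/-- independence number -/
noncomputable def indepNum (G : SimpleGraph V) : ℕ :=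
  sSup {n : ℕ | ∃ I : Set V, (∀ a ∈ I, ∀ b ∈ I, ¬ G.Adj a b) ∧ I.ncard = n}

/-- a leaf: a vertex of degree one -/
def IsLeaf (G : SimpleGraph V) (v : V) : Prop := (G.neighborSet v).ncard = 1

/-- a strong stem: a vertex adjacent to at least two leaves -/
def IsStrongStem (G : SimpleGraph V) (v : V) : Prop :=
  ∃ l₁ l₂, l₁ ≠ l₂ ∧ G.Adj v l₁ ∧ G.Adj v l₂ ∧ IsLeaf G l₁ ∧ IsLeaf G l₂

/-- a weak graph: no strong stems -/
def IsWeakGraph (G : SimpleGraph V) : Prop := ∀ v, ¬ IsStrongStem G v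

/-- the set `S` induces a star (with some center `c`). -/
def IsStarSet (G : SimpleGraph V) (S : Set V) : Prop :=
  ∃ c ∈ S, (∀ x ∈ S, x ≠ c → G.Adj c x) ∧
    ∀ x ∈ S, ∀ y ∈ S, x ≠ c → y ≠ c → ¬ G.Adj x y

/-- two parts are adjacent -/
def PartsAdj (G : SimpleGraph V) (A B : Set V) : Prop :=
  ∃ a ∈ A, ∃ b ∈ B, G.Adj a b

/-- A simple star partitioning of (the vertices of) `G`. -/
structure IsSSP (G : SimpleGraph V) (P : Finset (Set V)) : Prop where
  cover : ∀ v : V, ∃! S, S ∈ P ∧ v ∈ S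
  star : ∀ S ∈ P, IsStarSet G S
  weakStem : ∀ v l, G.Adj v l → IsLeaf G l →
    (∀ l', G.Adj v l' → IsLeaf G l' → l' = l) → ({v, l} : Set V) ∈ P
  k1 : ∀ S ∈ P, S.ncard = 1 → ∃ A ∈ P, ∃ B ∈ P, A ≠ B ∧
    A.ncard ≠ 1 ∧ B.ncard ≠ 1 ∧ PartsAdj G S A ∧ PartsAdj G S B

/-- weight of a star partitioning: a part of order `k` has weight `k-1`. -/
noncomputable def SSPweight (P : Finset (Set V)) : ℕ := ∑ S ∈ P, (S.ncard - 1)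

/-- `S(G)`: minimum weight of a simple star partitioning. -/
noncomputable def starS (G : SimpleGraph V) : ℕ :=
  sInf {w : ℕ | ∃ P : Finset (Set V), IsSSP G P ∧ SSPweight P = w}

/-- `W` is the vertex set of a weak reduction of `G`: all but one leaf
neighbor of each strong stem are removed. -/
def IsWeakReduction (G : SimpleGraph V) (W : Set V) : Prop :=
  (∀ v, v ∉ W → IsLeaf G v ∧ ∃ s, G.Adj s v ∧ IsStrongStem G s) ∧
  (∀ s, IsStrongStem G s → ∃! l, l ∈ W ∧ G.Adj s l ∧ IsLeaf G l)

/-! Both leaves at a strong stem `v` must lie in any dominating set avoiding `v`, and a matching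
sends both of them to their only neighbour `v`. Hence `v` lies in both sets of a swap pair,
which are disjoint. -/

lemma IsLeaf.eq_of_adj {G : SimpleGraph V} {l u v : V} (hl : IsLeaf G l)
    (hu : G.Adj u l) (hv : G.Adj v l) : u = v := by
  obtain ⟨w, hw⟩ := Set.ncard_eq_one.mp hl
  have hu' : u ∈ G.neighborSet l := hu.symm
  have hv' : v ∈ G.neighborSet l := hv.symm
  rw [hw, Set.mem_singleton_iff] at hu' hv'
  rw [hu', hv']

lemma IsDomSet.mem_of_isLeaf {G : SimpleGraph V} {D : Set V} {v l : V} (hD : IsDomSet G D)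
    (hvl : G.Adj v l) (hl : IsLeaf G l) (hv : v ∉ D) : l ∈ D := by
  by_contra hlD
  obtain ⟨u, huD, hul⟩ := hD l hlD
  exact hv (hl.eq_of_adj hul hvl ▸ huD)

lemma IsStrongStem.mem_of_isDomSet {G : SimpleGraph V} {D : Set V} {v : V}
    (hv : IsStrongStem G v) (hD : IsDomSet G D) (f : D → V) (hf : Function.Injective f)
    (hadj : ∀ x : D, G.Adj x (f x)) : v ∈ D := by
  obtain ⟨l₁, l₂, hne, h₁, h₂, hl₁, hl₂⟩ := hv
  by_contra hvD
  have m₁ := hD.mem_of_isLeaf h₁ hl₁ hvD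
  have m₂ := hD.mem_of_isLeaf h₂ hl₂ hvD
  have e₁ : f ⟨l₁, m₁⟩ = v := hl₁.eq_of_adj (hadj ⟨l₁, m₁⟩).symm h₁
  have e₂ : f ⟨l₂, m₂⟩ = v := hl₂.eq_of_adj (hadj ⟨l₂, m₂⟩).symm h₂
  exact hne (congrArg Subtype.val (hf (e₁.trans e₂.symm)))

lemma IsSwapPair.symm {G : SimpleGraph V} {D D' : Set V} (h : IsSwapPair G D D') :
    IsSwapPair G D' D := by
  obtain ⟨hD, hD', hdisj, f, hf⟩ := h
  refine ⟨hD', hD, hdisj.symm, f.symm, fun y => ?_⟩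
  simpa using (hf (f.symm y)).symm

lemma IsSwapPair.mem_left_of_isStrongStem {G : SimpleGraph V} {D D' : Set V} {v : V}
    (h : IsSwapPair G D D') (hv : IsStrongStem G v) : v ∈ D := by
  obtain ⟨hD, -, -, f, hf⟩ := h
  exact hv.mem_of_isDomSet hD (fun x => f x) (Subtype.val_injective.comp f.injective) hf

theorem stmt_0_general {V : Type*} (G : SimpleGraph V)
    (h : ∃ v, IsStrongStem G v) :
    ¬ ∃ D D' : Set V, IsSwapPair G D D' := by
  rintro ⟨D, D', hDD'⟩
  obtain ⟨v, hv⟩ := h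
  have hdisj : Disjoint D D' := hDD'.2.2.1
  exact Set.disjoint_left.mp hdisj (hDD'.mem_left_of_isStrongStem hv)
    (hDD'.symm.mem_left_of_isStrongStem hv)

theorem stmt_0 {V : Type*} [Fintype V] (G : SimpleGraph V)
    (h : ∃ v, IsStrongStem G v) :
    ¬ ∃ D D' : Set V, IsSwapPair G D D' :=
  stmt_0_general G h
end

section
/- A non-trivial tree T has a swap set if and only if T is a weak tree (no vertex of T is adjacent to two or more leaves). -/
open SimpleGraph

variable {V : Type*}

/-!
Weakness is necessary: if `s` carries two leaves, the side of a swap pair not containing `s`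
must contain both leaves, and then the side containing `s` must match both of them to `s`.

For sufficiency we work with finite forests and exempt isolated vertices from domination, so
that vertices may be deleted. The end `a` of a longest path `a b c …` is a leaf and, by
weakness, `b` has no neighbours besides `a` and `c`. Delete `a, b`, solve the rest by
induction and match `a` with `b`. This fails only when `c` becomes a second leaf at some `s`;
then delete `a, b, c` instead, and put `b` on the side opposite `s`, so that `c` is dominated
by `b` on one side and by `s` on the other.
-/

namespace SimpleGraph

variable {G : SimpleGraph V} {S : Set V} {a b c l s u v : V}

def deleteVerts (G : SimpleGraph V) (S : Set V) : SimpleGraph V where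
  Adj x y := G.Adj x y ∧ x ∉ S ∧ y ∉ S
  symm := ⟨fun _ _ h => ⟨h.1.symm, h.2.2, h.2.1⟩⟩
  loopless := ⟨fun x h => G.loopless.irrefl x h.1⟩

@[simp]
lemma deleteVerts_adj : (G.deleteVerts S).Adj u v ↔ G.Adj u v ∧ u ∉ S ∧ v ∉ S := Iff.rfl

lemma deleteVerts_le : G.deleteVerts S ≤ G := fun _ _ h => h.1

lemma deleteVerts_lt (hab : G.Adj a b) (ha : a ∈ S) : G.deleteVerts S < G :=
  lt_of_le_of_ne deleteVerts_le fun h => by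
    rw [← h] at hab
    exact hab.2.1 ha

lemma neighborSet_deleteVerts (hv : v ∉ S) :
    (G.deleteVerts S).neighborSet v = G.neighborSet v \ S := by
  ext w
  simp [hv]

lemma mem_support_deleteVerts :
    v ∈ (G.deleteVerts S).support ↔ v ∉ S ∧ ∃ w ∉ S, G.Adj v w := by
  simp only [mem_support, deleteVerts_adj]
  tauto

lemma adj_of_neighborSet_eq (h : G.neighborSet l = {s}) : G.Adj s l :=
  (h.symm ▸ rfl : s ∈ G.neighborSet l).symm

lemma eq_of_adj_of_neighborSet_eq (hl : G.neighborSet l = {s}) (h : G.Adj l u) : u = s := by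
  rwa [← Set.mem_singleton_iff, ← hl]

lemma disjoint_neighborSet_of_pendant (ha : G.neighborSet a = {b}) (hb : G.neighborSet b ⊆ {a, c})
    {x : V} (hx : x ∉ ({a, b} : Set V)) (hxc : x ≠ c) : Disjoint (G.neighborSet x) {a, b} := by
  simp only [Set.mem_insert_iff, Set.mem_singleton_iff, not_or] at hx
  rw [Set.disjoint_right]
  rintro y (rfl | rfl) hxy
  · exact hx.2 (eq_of_adj_of_neighborSet_eq ha (G.adj_symm hxy))
  · rcases hb (G.adj_symm hxy) with rfl | rfl
    exacts [hx.1 rfl, hxc rfl]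

lemma IsAcyclic.neighborSet_eq_of_longest (hG : G.IsAcyclic) {h : G.Adj a b} {q : G.Walk b v}
    (hp : (Walk.cons h q).IsPath)
    (hmax : ∀ x y (p : G.Walk x y), p.IsPath → p.length ≤ (Walk.cons h q).length) :
    G.neighborSet a = {b} := by
  ext w
  refine ⟨fun haw => ?_, fun hw => (Set.mem_singleton_iff.mp hw) ▸ h⟩
  by_cases hw : w ∈ (Walk.cons h q).support
  · simpa using hG.eq_snd_of_adj_start hp haw hw
  · simpa using hmax _ _ _ (hp.cons hw (h := (G.adj_symm haw)))

/-- The end `a` of a longest path `a b c …` is a leaf, and so is every neighbour of `b`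
other than `c`, since each of them starts another longest path `w b c …`. -/
lemma IsAcyclic.exists_pendant [Finite V] (hG : G.IsAcyclic) (hne : G ≠ ⊥) :
    ∃ a b c, G.Adj a b ∧ G.neighborSet a = {b} ∧
      ∀ w ∈ G.neighborSet b, w ≠ c → G.neighborSet w = {b} := by
  obtain ⟨x, y, hxy⟩ := ne_bot_iff_exists_adj.mp hne
  have : Nonempty V := ⟨x⟩
  obtain ⟨u, v, p, hp, hmax⟩ := Walk.exists_isPath_forall_isPath_length_le_length G
  cases p with
  | nil => simpa using hmax _ _ _ (Walk.IsPath.of_adj hxy)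
  | cons h q =>
    refine ⟨_, _, q.snd, h, hG.neighborSet_eq_of_longest hp hmax, fun w hw hwc => ?_⟩
    have hq := ((Walk.cons_isPath_iff _ _).mp hp).1
    have hwq : w ∉ q.support := fun hmem => hwc (hG.eq_snd_of_adj_start hq hw hmem)
    exact hG.neighborSet_eq_of_longest (h := G.adj_symm hw) (hq.cons hwq) (by simpa using hmax)

end SimpleGraph

section

variable {G G' : SimpleGraph V} {S D D' : Set V} {a b c s l l₁ l₂ v : V}

lemma isLeaf_iff : IsLeaf G v ↔ ∃ u, G.neighborSet v = {u} := Set.ncard_eq_one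

lemma IsLeaf.neighborSet_eq (hl : IsLeaf G l) (h : G.Adj v l) : G.neighborSet l = {v} := by
  obtain ⟨u, hu⟩ := isLeaf_iff.mp hl
  rwa [Set.eq_singleton_iff_unique_mem.mp hu |>.2 v h.symm]

lemma IsWeakGraph.eq_of_neighborSet_eq (hw : IsWeakGraph G) (h₁ : G.neighborSet l₁ = {s})
    (h₂ : G.neighborSet l₂ = {s}) : l₁ = l₂ := by
  by_contra hne
  exact hw s ⟨l₁, l₂, hne, adj_of_neighborSet_eq h₁, adj_of_neighborSet_eq h₂,
    isLeaf_iff.mpr ⟨s, h₁⟩, isLeaf_iff.mpr ⟨s, h₂⟩⟩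

def DominatesSupport (G : SimpleGraph V) (D : Set V) : Prop :=
  ∀ v ∈ G.support, v ∉ D → ∃ u ∈ D, G.Adj u v

/-- `IsSwapPair` with isolated vertices exempted from domination. -/
structure IsSupportSwapPair (G : SimpleGraph V) (D D' : Set V) : Prop where
  dom_left : DominatesSupport G D
  dom_right : DominatesSupport G D'
  disjoint : Disjoint D D'
  exists_matching : ∃ f : D ≃ D', ∀ x : D, G.Adj x (f x)

lemma IsDomSet.dominatesSupport (hD : IsDomSet G D) : DominatesSupport G D :=
  fun v _ hv => hD v hv

lemma DominatesSupport.isDomSet (hD : DominatesSupport G D) (hG : G.support = Set.univ) :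
    IsDomSet G D :=
  fun v hv => hD v (hG ▸ Set.mem_univ v) hv

lemma DominatesSupport.mem_or_mem (hD : DominatesSupport G D) (hl : G.neighborSet l = {s}) :
    l ∈ D ∨ s ∈ D := by
  refine or_iff_not_imp_left.mpr fun hlD => ?_
  obtain ⟨u, huD, hul⟩ := hD l (adj_of_neighborSet_eq hl).right_mem_support hlD
  rwa [← eq_of_adj_of_neighborSet_eq hl hul.symm]

lemma IsSwapPair.isSupportSwapPair (h : IsSwapPair G D D') : IsSupportSwapPair G D D' :=
  ⟨h.1.dominatesSupport, h.2.1.dominatesSupport, h.2.2.1, h.2.2.2⟩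

namespace IsSupportSwapPair

lemma isSwapPair (h : IsSupportSwapPair G D D') (hG : G.support = Set.univ) :
    IsSwapPair G D D' :=
  ⟨h.dom_left.isDomSet hG, h.dom_right.isDomSet hG, h.disjoint, h.exists_matching⟩

lemma symm (h : IsSupportSwapPair G D D') : IsSupportSwapPair G D' D := by
  obtain ⟨f, hf⟩ := h.exists_matching
  refine ⟨h.dom_right, h.dom_left, h.disjoint.symm, f.symm, fun y => ?_⟩
  simpa using (hf (f.symm y)).symm

lemma subset_support_left (h : IsSupportSwapPair G D D') : D ⊆ G.support := by
  obtain ⟨f, hf⟩ := h.exists_matching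
  exact fun x hx => (hf ⟨x, hx⟩).left_mem_support

lemma subset_support_right (h : IsSupportSwapPair G D D') : D' ⊆ G.support :=
  h.symm.subset_support_left

lemma mem_union (h : IsSupportSwapPair G D D') (hl : G.neighborSet l = {s}) : s ∈ D ∪ D' := by
  rcases h.dom_left.mem_or_mem hl with hlD | hsD
  · exact Or.inr ((h.dom_right.mem_or_mem hl).resolve_left (h.disjoint.notMem_of_mem_left hlD))
  · exact Or.inl hsD

lemma eq_of_mem_left (h : IsSupportSwapPair G D D') (hs : s ∈ D)
    (h₁ : G.neighborSet l₁ = {s}) (h₂ : G.neighborSet l₂ = {s}) : l₁ = l₂ := by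
  obtain ⟨f, hf⟩ := h.symm.exists_matching
  have hsD' : s ∉ D' := h.disjoint.notMem_of_mem_left hs
  have hl₁ := (h.dom_right.mem_or_mem h₁).resolve_right hsD'
  have hl₂ := (h.dom_right.mem_or_mem h₂).resolve_right hsD'
  have hpartner : ∀ (l) (hl : l ∈ D'), G.neighborSet l = {s} → (f ⟨l, hl⟩ : V) = s :=
    fun l hl hls => eq_of_adj_of_neighborSet_eq hls (hf ⟨l, hl⟩)
  exact congrArg Subtype.val
    (f.injective (Subtype.ext ((hpartner l₁ hl₁ h₁).trans (hpartner l₂ hl₂ h₂).symm)))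

lemma isWeakGraph (h : IsSupportSwapPair G D D') : IsWeakGraph G := by
  rintro s ⟨l₁, l₂, hne, hs₁, hs₂, hl₁, hl₂⟩
  have h₁ := hl₁.neighborSet_eq hs₁
  have h₂ := hl₂.neighborSet_eq hs₂
  by_cases hsD : s ∈ D
  · exact hne (h.eq_of_mem_left hsD h₁ h₂)
  by_cases hsD' : s ∈ D'
  · exact hne (h.symm.eq_of_mem_left hsD' h₁ h₂)
  exact h.disjoint.notMem_of_mem_left ((h.dom_left.mem_or_mem h₁).resolve_right hsD)
    ((h.dom_right.mem_or_mem h₁).resolve_right hsD')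

lemma bot : IsSupportSwapPair (⊥ : SimpleGraph V) ∅ ∅ :=
  ⟨fun _ hv => by simp at hv, fun _ hv => by simp at hv, Set.disjoint_empty _,
    Equiv.refl _, fun x => x.2.elim⟩

end IsSupportSwapPair

lemma DominatesSupport.insert (hD : DominatesSupport G' D) (hle : G' ≤ G) (hab : G.Adj a b)
    (hrest : ∀ v ∈ G.support, v ∉ G'.support → v ≠ a → v ≠ b → ∃ u ∈ insert a D, G.Adj u v) :
    DominatesSupport G (insert a D) := by
  intro v hv hvD
  have hva : v ≠ a := fun h => hvD (h ▸ Set.mem_insert v D)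
  by_cases hv' : v ∈ G'.support
  · obtain ⟨u, huD, huv⟩ := hD v hv' fun h => hvD (Set.mem_insert_of_mem a h)
    exact ⟨u, Set.mem_insert_of_mem a huD, hle huv⟩
  by_cases hvb : v = b
  · exact ⟨a, Set.mem_insert a D, hvb ▸ hab⟩
  exact hrest v hv hv' hva hvb

lemma IsSupportSwapPair.insert_edge (h : IsSupportSwapPair G' D D') (hle : G' ≤ G) (hab : G.Adj a b)
    (ha : a ∉ G'.support) (hb : b ∉ G'.support)
    (hrest : ∀ v ∈ G.support, v ∉ G'.support → v ≠ a → v ≠ b → ∃ u ∈ insert a D, G.Adj u v)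
    (hrest' : ∀ v ∈ G.support, v ∉ G'.support → v ≠ a → v ≠ b → ∃ u ∈ insert b D', G.Adj u v) :
    IsSupportSwapPair G (insert a D) (insert b D') := by
  classical
  have haD : a ∉ D := fun h' => ha (h.subset_support_left h')
  have haD' : a ∉ D' := fun h' => ha (h.subset_support_right h')
  have hbD : b ∉ D := fun h' => hb (h.subset_support_left h')
  have hbD' : b ∉ D' := fun h' => hb (h.subset_support_right h')
  obtain ⟨f, hf⟩ := h.exists_matching
  refine ⟨h.dom_left.insert hle hab hrest, h.dom_right.insert hle hab.symm fun v hv hv' hvb hva =>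
      hrest' v hv hv' hva hvb, ?_, ?_⟩
  · simp only [Set.disjoint_insert_left, Set.disjoint_insert_right, Set.mem_insert_iff, not_or]
    exact ⟨⟨hab.ne.symm, hbD⟩, haD', h.disjoint⟩
  · refine ⟨(Equiv.Set.insert haD).trans
      ((f.sumCongr (Equiv.refl PUnit)).trans (Equiv.Set.insert hbD').symm), ?_⟩
    rintro ⟨x, rfl | hx⟩
    · simpa using hab
    · simpa [Equiv.Set.insert_apply_right haD ⟨x, hx⟩] using hle (hf ⟨x, hx⟩)

lemma IsSupportSwapPair.insert_of_deleteVerts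
    (h : IsSupportSwapPair (G.deleteVerts {a, b}) D D') (hab : G.Adj a b)
    (hsupp : G.support ⊆ (G.deleteVerts {a, b}).support ∪ {a, b}) :
    IsSupportSwapPair G (insert a D) (insert b D') := by
  have hrest : ∀ v ∈ G.support, v ∉ (G.deleteVerts {a, b}).support → v ≠ a → v ≠ b → False :=
    fun v hv hv' hva hvb => by simpa [hv', hva, hvb] using hsupp hv
  exact h.insert_edge deleteVerts_le hab (by simp [mem_support_deleteVerts])
    (by simp [mem_support_deleteVerts]) (fun v hv hv' hva hvb => (hrest v hv hv' hva hvb).elim)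
    (fun v hv hv' hva hvb => (hrest v hv hv' hva hvb).elim)

lemma IsSupportSwapPair.exists_of_deleteVerts_path
    (h : IsSupportSwapPair (G.deleteVerts {a, b, c}) D D') (hs : s ∈ D ∪ D')
    (hab : G.Adj a b) (hbc : G.Adj b c) (hcs : G.Adj c s)
    (hsupp : G.support ⊆ (G.deleteVerts {a, b, c}).support ∪ {a, b, c}) :
    ∃ D D', IsSupportSwapPair G D D' := by
  wlog hsD' : s ∈ D' generalizing D D'
  · exact this h.symm hs.symm (hs.resolve_right hsD')
  have hrest : ∀ v ∈ G.support, v ∉ (G.deleteVerts {a, b, c}).support → v ≠ b → v ≠ a →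
      v = c := fun v hv hv' hvb hva => by simpa [hv', hva, hvb] using hsupp hv
  exact ⟨_, _, h.insert_edge deleteVerts_le (G.adj_symm hab) (by simp [mem_support_deleteVerts])
    (by simp [mem_support_deleteVerts])
    (fun v hv hv' hvb hva => ⟨b, Set.mem_insert b D, hrest v hv hv' hvb hva ▸ hbc⟩)
    (fun v hv hv' hvb hva => ⟨s, Set.mem_insert_of_mem a hsD',
      hrest v hv hv' hvb hva ▸ G.adj_symm hcs⟩)⟩

lemma SimpleGraph.IsAcyclic.exists_pendant_of_isWeakGraph [Finite V] (hG : G.IsAcyclic)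
    (hw : IsWeakGraph G) (hne : G ≠ ⊥) :
    ∃ a b c, G.Adj a b ∧ G.neighborSet a = {b} ∧ G.neighborSet b ⊆ {a, c} := by
  obtain ⟨a, b, c, hab, ha, hb⟩ := hG.exists_pendant hne
  refine ⟨a, b, c, hab, ha, fun w hbw => ?_⟩
  by_cases hwc : w = c
  · simp [hwc]
  · exact Or.inl (hw.eq_of_neighborSet_eq (hb w hbw hwc) ha)

/-- Outside `S`, only `u` loses neighbours, so `u` is the only possible new leaf of `G - S`. -/
lemma IsWeakGraph.deleteVerts (hw : IsWeakGraph G) {u : V}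
    (hS : ∀ x ∉ S, x ≠ u → Disjoint (G.neighborSet x) S) :
    IsWeakGraph (G.deleteVerts S) ∨
      ∃ s l, l ≠ u ∧ l ∉ S ∧ (G.deleteVerts S).neighborSet u = {s} ∧ G.neighborSet l = {s} := by
  refine or_iff_not_imp_right.mpr fun hno v ⟨l₁, l₂, hne, h₁, h₂, hl₁, hl₂⟩ => ?_
  have hN₁ := hl₁.neighborSet_eq h₁
  have hN₂ := hl₂.neighborSet_eq h₂
  have hN : ∀ l, (G.deleteVerts S).Adj v l → l ≠ u →
      (G.deleteVerts S).neighborSet l = G.neighborSet l := fun l hl hlu => by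
    rw [neighborSet_deleteVerts hl.2.2, (hS l hl.2.2 hlu).sdiff_eq_left]
  rcases eq_or_ne l₁ u with rfl | hu₁
  · exact hno ⟨v, l₂, hne.symm, h₂.2.2, hN₁, hN l₂ h₂ hne.symm ▸ hN₂⟩
  rcases eq_or_ne l₂ u with rfl | hu₂
  · exact hno ⟨v, l₁, hne, h₁.2.2, hN₂, hN l₁ h₁ hne ▸ hN₁⟩
  exact hne (hw.eq_of_neighborSet_eq (hN l₁ h₁ hu₁ ▸ hN₁) (hN l₂ h₂ hu₂ ▸ hN₂))

lemma IsWeakGraph.support_subset_deleteVerts (hw : IsWeakGraph G) (ha : G.neighborSet a = {b}) :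
    G.support ⊆ (G.deleteVerts {a, b}).support ∪ {a, b} := by
  intro v hv
  by_contra hv'
  simp only [Set.mem_union, mem_support_deleteVerts, not_or, not_and, not_exists] at hv'
  obtain ⟨hvout, hvab⟩ := hv'
  have hva : v ≠ a := fun h => hvab (by simp [h])
  have hvN : G.neighborSet v = {b} := by
    refine (Set.Nonempty.subset_singleton_iff hv).mp fun w hvw => ?_
    by_contra hwb
    have hwa : w ≠ a := fun h => hvab (Set.mem_insert_of_mem a
      (eq_of_adj_of_neighborSet_eq ha (h ▸ G.adj_symm hvw)))
    exact hvout hvab w (by simp [hwa, hwb]) hvw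
  exact hva (hw.eq_of_neighborSet_eq hvN ha)

lemma IsWeakGraph.deleteVerts_path (hw : IsWeakGraph G) (ha : G.neighborSet a = {b})
    (hb : G.neighborSet b ⊆ {a, c}) (hc : G.neighborSet c \ {a, b} = {s})
    (hl : G.neighborSet l = {s}) (hlS : l ∉ ({a, b, c} : Set V)) (hsS : s ∉ ({a, b, c} : Set V)) :
    IsWeakGraph (G.deleteVerts {a, b, c}) := by
  refine (hw.deleteVerts (u := s) fun x hx hxs => ?_).resolve_right ?_
  · have hxab : x ∉ ({a, b} : Set V) := fun h => hx (by simp_all)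
    have hxc : x ∉ G.neighborSet c \ {a, b} := by simpa [hc] using hxs
    have := disjoint_neighborSet_of_pendant ha hb hxab fun h => hx (by simp [h])
    simp only [Set.disjoint_insert_right, Set.disjoint_singleton_right] at this ⊢
    exact ⟨this.1, this.2, fun hcx => hxc ⟨G.adj_symm hcx, hxab⟩⟩
  · rintro ⟨x, l', hl's, -, hs, hl'⟩
    have hsl : l ∈ (G.deleteVerts {a, b, c}).neighborSet s :=
      ⟨adj_of_neighborSet_eq hl, hsS, hlS⟩
    rw [hs, Set.mem_singleton_iff] at hsl
    exact hl's (eq_of_adj_of_neighborSet_eq hl (hsl ▸ adj_of_neighborSet_eq hl'))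

lemma IsWeakGraph.support_subset_deleteVerts_path (hw : IsWeakGraph G)
    (ha : G.neighborSet a = {b}) (hc : G.neighborSet c \ {a, b} = {s})
    (hl : G.neighborSet l = {s}) (hlS : l ∉ ({a, b, c} : Set V)) (hsS : s ∉ ({a, b, c} : Set V)) :
    G.support ⊆ (G.deleteVerts {a, b, c}).support ∪ {a, b, c} := by
  intro v hv
  rcases hw.support_subset_deleteVerts ha hv with hv' | hv'
  · obtain ⟨hvab, w, hwab, hvw⟩ := mem_support_deleteVerts.mp hv'
    by_cases hvc : v = c
    · simp [hvc]
    refine Or.inl (mem_support_deleteVerts.mpr ?_)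
    by_cases hwc : w = c
    · have hvs : v ∈ G.neighborSet c \ {a, b} := ⟨hwc ▸ G.adj_symm hvw, hvab⟩
      rw [hc, Set.mem_singleton_iff] at hvs
      exact hvs ▸ ⟨hsS, l, hlS, adj_of_neighborSet_eq hl⟩
    · simp only [Set.mem_insert_iff, Set.mem_singleton_iff, not_or] at hvab hwab ⊢
      exact ⟨⟨hvab.1, hvab.2, hvc⟩, w, ⟨hwab.1, hwab.2, hwc⟩, hvw⟩
  · right
    simp only [Set.mem_insert_iff, Set.mem_singleton_iff] at hv' ⊢
    tauto

lemma IsWeakGraph.exists_isSupportSwapPair_of_deleteVerts_path (hw : IsWeakGraph G)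
    (hab : G.Adj a b) (ha : G.neighborSet a = {b}) (hb : G.neighborSet b ⊆ {a, c})
    (hc : (G.deleteVerts {a, b}).neighborSet c = {s}) (hl : G.neighborSet l = {s})
    (hlc : l ≠ c) (hlS : l ∉ ({a, b} : Set V))
    (hpair : IsWeakGraph (G.deleteVerts {a, b, c}) →
      ∃ D D', IsSupportSwapPair (G.deleteVerts {a, b, c}) D D') :
    ∃ D D', IsSupportSwapPair G D D' := by
  have hcs : (G.deleteVerts {a, b}).Adj c s := by
    rw [← mem_neighborSet, hc]
    rfl
  obtain ⟨hcs, hcS, hsS⟩ := hcs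
  rw [neighborSet_deleteVerts hcS] at hc
  have hbc : G.Adj b c := by
    by_contra hbc
    refine hlc (hw.eq_of_neighborSet_eq hl ?_)
    rw [← hc, eq_comm, sdiff_eq_left, Set.disjoint_right]
    rintro y (rfl | rfl) hcy
    exacts [hcS (by simp [eq_of_adj_of_neighborSet_eq ha (G.adj_symm hcy)]), hbc hcy.symm]
  have hlS' : l ∉ ({a, b, c} : Set V) := by simpa [hlc] using hlS
  have hsS' : s ∉ ({a, b, c} : Set V) := by simpa [hcs.ne'] using hsS
  obtain ⟨D, D', h⟩ := hpair (hw.deleteVerts_path ha hb hc hl hlS' hsS')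
  have hs : s ∈ D ∪ D' := h.mem_union (l := l) (by
    rw [neighborSet_deleteVerts hlS', hl]
    exact (Set.disjoint_singleton_left.mpr hsS').sdiff_eq_left)
  exact h.exists_of_deleteVerts_path hs hab hbc hcs
    (hw.support_subset_deleteVerts_path ha hc hl hlS' hsS')

theorem SimpleGraph.IsAcyclic.exists_isSupportSwapPair [Finite V] (hG : G.IsAcyclic)
    (hw : IsWeakGraph G) :
    ∃ D D', IsSupportSwapPair G D D' := by
  induction G using WellFoundedLT.induction with
  | _ G ih =>
  rcases eq_or_ne G ⊥ with rfl | hne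
  · exact ⟨∅, ∅, .bot⟩
  obtain ⟨a, b, c, hab, ha, hb⟩ := hG.exists_pendant_of_isWeakGraph hw hne
  have ih' : ∀ S : Set V, a ∈ S → IsWeakGraph (G.deleteVerts S) →
      ∃ D D', IsSupportSwapPair (G.deleteVerts S) D D' := fun S haS =>
    ih _ (deleteVerts_lt hab haS) (hG.anti deleteVerts_le)
  rcases hw.deleteVerts fun x hx hxc => disjoint_neighborSet_of_pendant ha hb hx hxc with
    hw' | ⟨s, l, hlc, hlS, hc, hl⟩
  · obtain ⟨D, D', h⟩ := ih' _ (by simp) hw'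
    exact ⟨_, _, h.insert_of_deleteVerts hab (hw.support_subset_deleteVerts ha)⟩
  · exact hw.exists_isSupportSwapPair_of_deleteVerts_path hab ha hb hc hl hlc hlS
      (ih' _ (by simp))

end

theorem stmt_3 {V : Type*} [Fintype V] (T : SimpleGraph V) (hT : T.IsTree)
    (hnt : 2 ≤ Fintype.card V) :
    (∃ D D' : Set V, IsSwapPair T D D') ↔ IsWeakGraph T := by
  refine ⟨fun ⟨D, D', h⟩ => h.isSupportSwapPair.isWeakGraph, fun hw => ?_⟩
  have : Nontrivial V := Fintype.one_lt_card_iff_nontrivial.mp hnt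
  obtain ⟨D, D', h⟩ := hT.isAcyclic.exists_isSupportSwapPair hw
  exact ⟨D, D', h.isSwapPair hT.connected.preconnected.support_eq_univ⟩
end

section
/- If a non-trivial weak tree T admits a minimum-weight simple star partitioning, then it admits one in which every part is a K_1 or a K_2. -/
/-!
Among the minimum-weight simple star partitionings choose one minimising `∑ (|S| - 2)`, and
suppose a part `S` has at least three vertices, say with centre `c`. A non-centre vertex `y` of `S`
is not a leaf: in a weak graph it would be the only leaf at `c`, forcing `{c, y}` to be a part. So
`y` has a neighbour `z` outside `S`. If some neighbour of `y` outside `S` is a singleton part `{a}`,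
moving `y` into it keeps the weight and lowers `∑ (|S| - 2)`. Otherwise splitting `y` off as the
singleton part `{y}`, adjacent to the non-singleton parts `S \ {y}` and the part of `z`, lowers
the weight. Both contradict the choice of the partitioning.
-/


open SimpleGraph

variable {V : Type*}

namespace Finset

lemma sum_insert_le_add {α M : Type*} [DecidableEq α] [AddCommMonoid M] [PartialOrder M]
    [CanonicallyOrderedAdd M] (f : α → M) (a : α) (s : Finset α) :
    ∑ x ∈ insert a s, f x ≤ f a + ∑ x ∈ s, f x := by
  by_cases h : a ∈ s
  · rw [insert_eq_of_mem h]
    exact le_add_self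
  · rw [sum_insert h]

variable [DecidableEq (Set V)] {P : Finset (Set V)} {S B A : Set V} {y : V}

-- `B` is a part of `P`, or `∅` to make `{y}` a new part.
def moveVertex (P : Finset (Set V)) (S B : Set V) (y : V) : Finset (Set V) :=
  insert (S \ {y}) (insert (insert y B) ((P.erase S).erase B))

lemma mem_moveVertex :
    A ∈ P.moveVertex S B y ↔ A = S \ {y} ∨ A = insert y B ∨ (A ∈ P ∧ A ≠ S ∧ A ≠ B) := by
  simp only [Finset.moveVertex, mem_insert, mem_erase]
  tauto

lemma sum_moveVertex_le (f : Set V → ℕ) (hS : S ∈ P) (hB : B ∈ P ∨ f B = 0) (hBS : B ≠ S) :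
    ∑ A ∈ P.moveVertex S B y, f A + f S + f B ≤ f (S \ {y}) + f (insert y B) + ∑ A ∈ P, f A := by
  have hrest : ∑ A ∈ (P.erase S).erase B, f A + f B = ∑ A ∈ P.erase S, f A := by
    rcases hB with hB | hB
    · exact sum_erase_add _ _ (mem_erase.2 ⟨hBS, hB⟩)
    · rw [hB, add_zero, sum_erase _ hB]
  have h₁ := sum_insert_le_add f (S \ {y}) (insert (insert y B) ((P.erase S).erase B))
  have h₂ := sum_insert_le_add f (insert y B) ((P.erase S).erase B)
  rw [Finset.moveVertex, ← sum_erase_add _ _ hS]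
  omega

lemma cover_moveVertex (hcov : ∀ v, ∃! A, A ∈ P ∧ v ∈ A) (hS : S ∈ P) (hyS : y ∈ S)
    (hB : B ∈ P ∨ B = ∅) (hBS : B ≠ S) : ∀ v, ∃! A, A ∈ P.moveVertex S B y ∧ v ∈ A := by
  have same : ∀ {v A A'}, A ∈ P → A' ∈ P → v ∈ A → v ∈ A' → A = A' :=
    fun hA hA' hv hv' => (hcov _).unique ⟨hA, hv⟩ ⟨hA', hv'⟩
  have hyB : y ∉ B := by
    rcases hB with hB | rfl
    exacts [fun h => hBS (same hB hS h hyS), id]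
  intro v
  refine existsUnique_of_exists_of_unique ?_ ?_
  · obtain ⟨A₀, ⟨hA₀, hvA₀⟩, -⟩ := hcov v
    by_cases hvy : v = y
    · exact ⟨insert y B, mem_moveVertex.2 (Or.inr (Or.inl rfl)), by simp [hvy]⟩
    by_cases hA₀S : A₀ = S
    · exact ⟨S \ {y}, mem_moveVertex.2 (Or.inl rfl), by simp [← hA₀S, hvA₀, hvy]⟩
    by_cases hA₀B : A₀ = B
    · exact ⟨insert y B, mem_moveVertex.2 (Or.inr (Or.inl rfl)), by simp [← hA₀B, hvA₀]⟩
    exact ⟨A₀, mem_moveVertex.2 (Or.inr (Or.inr ⟨hA₀, hA₀S, hA₀B⟩)), hvA₀⟩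
  · rintro A A' ⟨hA, hvA⟩ ⟨hA', hvA'⟩
    rw [mem_moveVertex] at hA hA'
    grind

end Finset

def IsStarCenter (G : SimpleGraph V) (S : Set V) (c : V) : Prop :=
  c ∈ S ∧ (∀ x ∈ S, x ≠ c → G.Adj c x) ∧ ∀ x ∈ S, ∀ y ∈ S, x ≠ c → y ≠ c → ¬ G.Adj x y

section SSP

variable {T : SimpleGraph V} {P : Finset (Set V)} {S B : Set V} {c y : V}

lemma IsSSP.eq_of_mem (hP : IsSSP T P) {A A' : Set V} {v : V} (hA : A ∈ P) (hA' : A' ∈ P)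
    (hvA : v ∈ A) (hvA' : v ∈ A') : A = A' :=
  (hP.cover v).unique ⟨hA, hvA⟩ ⟨hA', hvA'⟩

lemma IsSSP.exists_isStarCenter (hP : IsSSP T P) (hS : S ∈ P) : ∃ c, IsStarCenter T S c :=
  hP.star S hS

lemma IsSSP.starS_le (hP : IsSSP T P) : starS T ≤ SSPweight P :=
  Nat.sInf_le ⟨P, hP, rfl⟩

lemma IsStarCenter.adj {x : V} (hc : IsStarCenter T S c) (hx : x ∈ S) (hxc : x ≠ c) :
    T.Adj c x :=
  hc.2.1 x hx hxc

lemma IsStarCenter.not_adj {x x' : V} (hc : IsStarCenter T S c) (hx : x ∈ S) (hx' : x' ∈ S)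
    (hxc : x ≠ c) (hx'c : x' ≠ c) : ¬T.Adj x x' :=
  hc.2.2 x hx x' hx' hxc hx'c

lemma IsStarCenter.isStarSet (hc : IsStarCenter T S c) : IsStarSet T S :=
  ⟨c, hc⟩

lemma IsStarCenter.diff_singleton (hc : IsStarCenter T S c) (hyc : y ≠ c) :
    IsStarCenter T (S \ {y}) c :=
  ⟨⟨hc.1, hyc.symm⟩, fun _ hx => hc.adj hx.1, fun _ hx _ hx' => hc.not_adj hx.1 hx'.1⟩

lemma isStarSet_singleton (y : V) : IsStarSet T {y} :=
  ⟨y, rfl, fun _ hx hxy => absurd hx hxy, fun _ hx _ _ hxy => absurd hx hxy⟩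

lemma isStarSet_pair {z : V} (h : T.Adj y z) : IsStarSet T {y, z} := by
  refine ⟨y, by simp, ?_, ?_⟩
  · rintro x (rfl | rfl) hxy
    exacts [absurd rfl hxy, h]
  · rintro x (rfl | rfl) x' (rfl | rfl) <;> simp

lemma exists_adj_ne_of_not_isLeaf {G : SimpleGraph V} (hy : ¬IsLeaf G y) (hc : G.Adj y c) :
    ∃ z, G.Adj y z ∧ z ≠ c := by
  by_contra! h
  refine hy ?_
  have : G.neighborSet y = {c} := Set.eq_singleton_iff_unique_mem.2 ⟨hc, h⟩
  rw [IsLeaf, this, Set.ncard_singleton]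

lemma Set.Subsingleton.ne_of_ncard_ne_one {B W : Set V} {w : V} (hB : B.Subsingleton)
    (hw : w ∈ W) (hW : W.ncard ≠ 1) : W ≠ B := by
  rintro rfl
  exact hW (by rw [hB.eq_singleton_of_mem hw, Set.ncard_singleton])

variable [DecidableEq (Set V)]

lemma IsSSP.exists_partsAdj_moveVertex (hP : IsSSP T P) (hS : S ∈ P)
    (hSy1 : (S \ {y}).ncard ≠ 1) (hSy : S \ {y} ∉ P) (hyB : insert y B ∉ P) (hBs : B.Subsingleton)
    (hsingle : (insert y B).ncard = 1 → ∀ a ∉ S, T.Adj y a → {a} ∉ P)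
    {A W : Set V} (hA : A ∈ P) (hAS : A ≠ S) (hA1 : A.ncard = 1)
    (hW : W ∈ P) (hW1 : W.ncard ≠ 1) (hAW : PartsAdj T A W) :
    ∃ W' ∈ P.moveVertex S B y, W'.ncard ≠ 1 ∧ PartsAdj T A W' ∧ (W' = W ∨ W = S ∧ W' ∉ P) := by
  obtain ⟨a, ha, b, hb, hab⟩ := hAW
  by_cases hWS : W = S
  · subst hWS
    by_cases hby : b = y
    · subst hby
      refine ⟨insert b B, Finset.mem_moveVertex.2 (Or.inr (Or.inl rfl)), ?_,
        ⟨a, ha, b, Set.mem_insert b B, hab⟩, Or.inr ⟨rfl, hyB⟩⟩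
      intro h1
      have haW : a ∉ W := fun haW => hAS (hP.eq_of_mem hA hS ha haW)
      obtain ⟨a', rfl⟩ := Set.ncard_eq_one.1 hA1
      obtain rfl : a = a' := ha
      exact hsingle h1 a haW hab.symm hA
    · exact ⟨W \ {y}, Finset.mem_moveVertex.2 (Or.inl rfl), hSy1,
        ⟨a, ha, b, ⟨hb, hby⟩, hab⟩, Or.inr ⟨rfl, hSy⟩⟩
  · exact ⟨W, Finset.mem_moveVertex.2 (Or.inr (Or.inr ⟨hW, hWS, hBs.ne_of_ncard_ne_one hb hW1⟩)),
      hW1, ⟨a, ha, b, hb, hab⟩, Or.inl rfl⟩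

lemma IsSSP.moveVertex (hP : IsSSP T P) (hS : S ∈ P) (hS3 : 3 ≤ S.ncard)
    (hc : IsStarCenter T S c) (hyS : y ∈ S) (hyc : y ≠ c)
    (hB : B ∈ P ∨ B = ∅) (hBs : B.Subsingleton) (hyB : IsStarSet T (insert y B))
    (hk1 : (insert y B).ncard = 1 →
      (∃ C ∈ P, C ≠ S ∧ C.ncard ≠ 1 ∧ PartsAdj T {y} C) ∧ ∀ a ∉ S, T.Adj y a → {a} ∉ P) :
    IsSSP T (P.moveVertex S B y) := by
  have hSy : (S \ {y}).ncard = S.ncard - 1 := Set.ncard_sdiff_singleton_of_mem hyS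
  have hB1 : B.ncard ≤ 1 := (Set.ncard_le_one_iff hBs.finite).2 fun ha hb => hBs ha hb
  have hyB2 : (insert y B).ncard ≤ 2 := (Set.ncard_insert_le y B).trans (by omega)
  have hSy_notMem : S \ {y} ∉ P := fun h =>
    (hP.eq_of_mem h hS (hc.diff_singleton hyc).1 hc.1 ▸ hyS).2 rfl
  have hyB_notMem : insert y B ∉ P := fun h => by
    rw [hP.eq_of_mem h hS (Set.mem_insert y B) hyS] at hyB2; omega
  have hold : ∀ {A w}, A ∈ P → A ≠ S → w ∈ A → A.ncard ≠ 1 → A ∈ P.moveVertex S B y :=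
    fun hA hAS hw hA1 =>
      Finset.mem_moveVertex.2 (Or.inr (Or.inr ⟨hA, hAS, hBs.ne_of_ncard_ne_one hw hA1⟩))
  refine ⟨Finset.cover_moveVertex hP.cover hS hyS hB (by rintro rfl; omega), ?_, ?_, ?_⟩
  · intro A hA
    rcases Finset.mem_moveVertex.1 hA with rfl | rfl | ⟨hA, -, -⟩
    exacts [(hc.diff_singleton hyc).isStarSet, hyB, hP.star A hA]
  · intro v l hvl hl hlu
    have h2 : ({v, l} : Set V).ncard = 2 := Set.ncard_pair hvl.ne
    exact hold (hP.weakStem v l hvl hl hlu) (by rintro h; rw [h] at h2; omega)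
      (Set.mem_insert v _) (by omega)
  · intro A hA hA1
    rcases Finset.mem_moveVertex.1 hA with rfl | rfl | ⟨hAP, hAS, -⟩
    · omega
    · obtain ⟨⟨C, hCP, hCS, hC1, a, rfl, w, hwC, hyw⟩, -⟩ := hk1 hA1
      refine ⟨S \ {a}, Finset.mem_moveVertex.2 (Or.inl rfl), C, hold hCP hCS hwC hC1,
        fun h => hSy_notMem (h ▸ hCP), by omega, hC1,
        ⟨a, Set.mem_insert a B, c, (hc.diff_singleton hyc).1, (hc.adj hyS hyc).symm⟩,
        ⟨a, Set.mem_insert a B, w, hwC, hyw⟩⟩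
    · obtain ⟨W₁, hW₁, W₂, hW₂, hne, hW₁1, hW₂1, hAW₁, hAW₂⟩ := hP.k1 A hAP hA1
      have hSy1 : (S \ {y}).ncard ≠ 1 := by omega
      obtain ⟨W₁', h₁, h₁1, hAW₁', hW₁'⟩ := hP.exists_partsAdj_moveVertex hS hSy1 hSy_notMem
        hyB_notMem hBs (fun h => (hk1 h).2) hAP hAS hA1 hW₁ hW₁1 hAW₁
      obtain ⟨W₂', h₂, h₂1, hAW₂', hW₂'⟩ := hP.exists_partsAdj_moveVertex hS hSy1 hSy_notMem
        hyB_notMem hBs (fun h => (hk1 h).2) hAP hAS hA1 hW₂ hW₂1 hAW₂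
      refine ⟨W₁', h₁, W₂', h₂, ?_, h₁1, h₂1, hAW₁', hAW₂'⟩
      rintro rfl
      rcases hW₁' with rfl | ⟨rfl, h⟩ <;> rcases hW₂' with rfl | ⟨rfl, h'⟩ <;> tauto

end SSP

noncomputable def SSPexcess (P : Finset (Set V)) : ℕ := ∑ S ∈ P, (S.ncard - 2)

section Improve

variable {T : SimpleGraph V} {P : Finset (Set V)} {S : Set V} {c y : V}

lemma IsSSP.not_isLeaf_of_isStarCenter (hweak : IsWeakGraph T) (hP : IsSSP T P) (hS : S ∈ P)
    (hS3 : 3 ≤ S.ncard) (hc : IsStarCenter T S c) (hyS : y ∈ S) (hyc : y ≠ c) : ¬IsLeaf T y := by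
  intro hy
  have hcy : T.Adj c y := hc.adj hyS hyc
  have hpair := hP.weakStem c y hcy hy fun l hcl hl => by
    by_contra hly
    exact hweak c ⟨l, y, hly, hcl, hcy, hl, hy⟩
  rw [← hP.eq_of_mem hpair hS (Set.mem_insert c _) hc.1, Set.ncard_pair hcy.ne] at hS3
  omega

lemma IsSSP.exists_lighter_or_less_excess (hweak : IsWeakGraph T) (hP : IsSSP T P)
    (hS : S ∈ P) (hS3 : 3 ≤ S.ncard) :
    ∃ Q, IsSSP T Q ∧ (SSPweight Q < SSPweight P ∨
      SSPweight Q ≤ SSPweight P ∧ SSPexcess Q < SSPexcess P) := by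
  classical
  obtain ⟨c, hc⟩ := hP.exists_isStarCenter hS
  obtain ⟨y, hyS, hyc⟩ := Set.exists_ne_of_one_lt_ncard (s := S) (by omega) c
  obtain ⟨z, hyz, hzc⟩ := exists_adj_ne_of_not_isLeaf
    (hP.not_isLeaf_of_isStarCenter hweak hS hS3 hc hyS hyc) (hc.adj hyS hyc).symm
  have hzS : z ∉ S := fun hzS => hc.not_adj hyS hzS hyc hzc hyz
  have hSy : (S \ {y}).ncard = S.ncard - 1 := Set.ncard_sdiff_singleton_of_mem hyS
  by_cases hsingle : ∃ a ∉ S, T.Adj y a ∧ {a} ∈ P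
  · obtain ⟨a, haS, hya, ha⟩ := hsingle
    have hpair : ({y, a} : Set V).ncard = 2 := Set.ncard_pair hya.ne
    have hQ := hP.moveVertex hS hS3 hc hyS hyc (Or.inl ha) Set.subsingleton_singleton
      (isStarSet_pair hya) fun h => absurd h (by rw [hpair]; omega)
    have hSa : ({a} : Set V) ≠ S := fun h => haS (h ▸ rfl)
    have hw := Finset.sum_moveVertex_le (fun A => A.ncard - 1) hS (Or.inl ha) hSa (y := y)
    have he := Finset.sum_moveVertex_le (fun A => A.ncard - 2) hS (Or.inl ha) hSa (y := y)
    simp only [Set.ncard_singleton, hpair, hSy] at hw he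
    exact ⟨_, hQ, Or.inr ⟨by unfold SSPweight; omega, by unfold SSPexcess; omega⟩⟩
  · push Not at hsingle
    obtain ⟨C, ⟨hCP, hzC⟩, -⟩ := hP.cover z
    have hC1 : C.ncard ≠ 1 := fun hC1 => by
      obtain ⟨z', rfl⟩ := Set.ncard_eq_one.1 hC1
      obtain rfl : z = z' := hzC
      exact hsingle z hzS hyz hCP
    have hQ := hP.moveVertex hS hS3 hc hyS hyc (Or.inr rfl) Set.subsingleton_empty
      (by rw [← Set.singleton_def]; exact isStarSet_singleton y)
      fun _ => ⟨⟨C, hCP, fun h => hzS (h ▸ hzC), hC1, ⟨y, rfl, z, hzC, hyz⟩⟩, hsingle⟩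
    have hw := Finset.sum_moveVertex_le (fun A => A.ncard - 1) hS (B := ∅) (y := y)
      (Or.inr (by simp)) (Set.nonempty_of_mem hyS).ne_empty.symm
    simp only [← Set.singleton_def, Set.ncard_singleton, Set.ncard_empty, hSy] at hw
    exact ⟨_, hQ, Or.inl (by unfold SSPweight; omega)⟩

end Improve

theorem stmt_4_general {V : Type*} (T : SimpleGraph V) (hweak : IsWeakGraph T)
    (hmin : ∃ P : Finset (Set V), IsSSP T P ∧ SSPweight P = starS T) :
    ∃ P : Finset (Set V), IsSSP T P ∧ SSPweight P = starS T ∧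
      ∀ S ∈ P, S.ncard ≤ 2 := by
  obtain ⟨P, ⟨hP, hw⟩, hPmin⟩ :=
    (measure SSPexcess).wf.has_min {P | IsSSP T P ∧ SSPweight P = starS T} hmin
  refine ⟨P, hP, hw, fun S hS => ?_⟩
  by_contra! hS3
  obtain ⟨Q, hQ, hQP⟩ := hP.exists_lighter_or_less_excess hweak hS hS3
  have := hQ.starS_le
  rcases hQP with h | ⟨h, h'⟩
  · omega
  · exact hPmin Q ⟨hQ, by omega⟩ h'

theorem stmt_4 {V : Type*} [Fintype V] (T : SimpleGraph V) (hT : T.IsTree)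
    (hnt : 2 ≤ Fintype.card V) (hweak : IsWeakGraph T)
    (hmin : ∃ P : Finset (Set V), IsSSP T P ∧ SSPweight P = starS T) :
    ∃ P : Finset (Set V), IsSSP T P ∧ SSPweight P = starS T ∧
      ∀ S ∈ P, S.ncard ≤ 2 :=
  stmt_4_general T hweak hmin
end

section
/- For any non-trivial weak tree T, DD_m(T) ≤ α(T), the independence number of T. -/
/-!
Two disjoint sets of equal size have at most `n / 2` elements each, and a forest is bipartite,
so `|D| ≤ n / 2 ≤ α(T)` for every swap pair `(D, D')`; the work is to show that a swap pair
exists. This holds for every finite weak forest, by induction on the edge set. A leaf `ℓ` at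
maximal distance from a vertex hangs at a vertex `s` whose neighbours are `ℓ` and at most one
further vertex `u`. Delete the edges at `s`, solve the smaller forest and add the pair `(s, ℓ)`.
If the deletion creates a strong stem `w`, its two leaves are `u` and a leaf `x` of the original
forest; then delete the edges at `u` as well. In the smaller solution `w` is matched, because of
its leaf `x`, and `(s, ℓ)` is oriented so that `u` sees `s` on one side and `w` on the other.
-/

open SimpleGraph

variable {V : Type*}

namespace SimpleGraph

variable {G : SimpleGraph V}

theorem adj_of_neighborSet_eq_singleton {v w : V} (h : G.neighborSet v = {w}) : G.Adj v w := by
  rw [← mem_neighborSet, h, Set.mem_singleton_iff]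

theorem eq_of_adj_of_neighborSet_eq_singleton {v w y : V} (h : G.neighborSet v = {w})
    (hy : G.Adj v y) : y = w := by
  rwa [← mem_neighborSet, h, Set.mem_singleton_iff] at hy

theorem neighborSet_eq_singleton_of_isLeaf {v w : V} (h : IsLeaf G v) (hvw : G.Adj v w) :
    G.neighborSet v = {w} := by
  obtain ⟨z, hz⟩ := Set.ncard_eq_one.1 h
  rw [hz, eq_of_adj_of_neighborSet_eq_singleton hz hvw]

theorem neighborSet_deleteIncidenceSet_of_not_adj {s v : V} (hvs : v ≠ s) (h : ¬ G.Adj v s) :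
    (G.deleteIncidenceSet s).neighborSet v = G.neighborSet v := by
  ext z
  simp only [mem_neighborSet, deleteIncidenceSet_adj, hvs, ne_eq, not_false_eq_true, true_and,
    and_iff_left_iff_imp]
  rintro hz rfl
  exact h hz

theorem neighborSet_deleteIncidenceSet_of_eq_singleton {x w s : V}
    (hx : G.neighborSet x = {w}) (hxs : x ≠ s) (hws : w ≠ s) :
    (G.deleteIncidenceSet s).neighborSet x = {w} :=
  (neighborSet_deleteIncidenceSet_of_not_adj hxs
    fun h => hws (eq_of_adj_of_neighborSet_eq_singleton hx h).symm).trans hx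

theorem insert_neighborSet_deleteIncidenceSet {s v : V} (h : G.Adj v s) :
    insert s ((G.deleteIncidenceSet s).neighborSet v) = G.neighborSet v := by
  ext z
  by_cases hz : z = s
  · simp [hz, h]
  · simp [deleteIncidenceSet_adj, hz, h.ne]

end SimpleGraph

theorem isLeaf_of_neighborSet_eq_singleton {G : SimpleGraph V} {v w : V}
    (h : G.neighborSet v = {w}) : IsLeaf G v := by
  rw [IsLeaf, h, Set.ncard_singleton]

theorem IsWeakGraph.anti {G G' : SimpleGraph V} (hG : IsWeakGraph G) (hle : G' ≤ G)
    (hleaf : ∀ v y, G'.neighborSet v = {y} → IsLeaf G v ∨ IsLeaf G' y) :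
    IsWeakGraph G' := by
  rintro y ⟨l₁, l₂, hne, h₁, h₂, hl₁, hl₂⟩
  have hy : ¬ IsLeaf G' y := fun hy =>
    hne (eq_of_adj_of_neighborSet_eq_singleton (neighborSet_eq_singleton_of_isLeaf hy h₂) h₁)
  have hG₁ := (hleaf _ _ (neighborSet_eq_singleton_of_isLeaf hl₁ h₁.symm)).resolve_right hy
  have hG₂ := (hleaf _ _ (neighborSet_eq_singleton_of_isLeaf hl₂ h₂.symm)).resolve_right hy
  exact hG y ⟨l₁, l₂, hne, hle h₁, hle h₂, hG₁, hG₂⟩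

namespace SimpleGraph.IsAcyclic

variable {G : SimpleGraph V}

theorem eq_penultimate_of_dist_add_one (hG : G.IsAcyclic) {r v y : V} {p : G.Walk r v}
    (hp : p.IsPath) (hyv : G.Adj y v) (hy : G.dist r y + 1 = G.dist r v) :
    y = p.penultimate := by
  classical
  obtain ⟨q, hq, hql⟩ := (p.reachable.trans hyv.reachable.symm).exists_path_of_dist
  have hv : v ∉ q.support := fun hv => by
    have := dist_le (q.takeUntil v hv)
    have := q.length_takeUntil_le_length hv
    omega
  have hpq : p = q.concat hyv :=
    congrArg Subtype.val ((hG.subsingleton_path r v).elim ⟨p, hp⟩ ⟨_, hq.concat hv hyv⟩)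
  rw [hpq, Walk.penultimate_concat]

theorem neighborSet_eq_singleton_of_dist_max (hG : G.IsAcyclic) {r v : V}
    (hv : G.dist r v ≠ 0) (hmax : ∀ y, G.dist r y ≤ G.dist r v) :
    ∃ s, G.neighborSet v = {s} ∧ G.dist r s + 1 = G.dist r v := by
  obtain ⟨hrv, hreach⟩ := dist_ne_zero_iff_ne_and_reachable.1 hv
  obtain ⟨p, hp, -⟩ := hreach.exists_path_of_dist
  have hcloser : ∀ y, G.Adj v y → G.dist r y + 1 = G.dist r v := fun y hy => by
    have := hG.dist_eq_dist_add_one_of_adj_of_reachable r hy hreach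
    have := hmax y
    omega
  have hpen : G.Adj v p.penultimate := (p.adj_penultimate (Walk.not_nil_of_ne hrv)).symm
  refine ⟨p.penultimate, Set.eq_singleton_iff_unique_mem.2 ⟨hpen, fun y hy => ?_⟩,
    hcloser _ hpen⟩
  exact hG.eq_penultimate_of_dist_add_one hp (G.adj_symm hy) (hcloser y hy)

theorem exists_pendant_s6 [Finite V] (hG : G.IsAcyclic) (hweak : IsWeakGraph G) {r w : V}
    (hrw : G.Adj r w) :
    ∃ ℓ s, G.neighborSet ℓ = {s} ∧ (G.neighborSet s \ {ℓ}).Subsingleton := by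
  have : Nonempty V := ⟨r⟩
  obtain ⟨ℓ, hmax⟩ := Finite.exists_max (G.dist r)
  have hℓ : G.dist r ℓ ≠ 0 := by
    have := hmax w
    rw [dist_eq_one_iff_adj.2 hrw] at this
    omega
  obtain ⟨s, hℓs, hs⟩ := hG.neighborSet_eq_singleton_of_dist_max hℓ hmax
  have hsℓ : G.Adj s ℓ := (adj_of_neighborSet_eq_singleton hℓs).symm
  have hreach : G.Reachable r s := (Reachable.of_dist_ne_zero hℓ).trans hsℓ.symm.reachable
  obtain ⟨p, hp, -⟩ := hreach.exists_path_of_dist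
  refine ⟨ℓ, s, hℓs, ?_⟩
  suffices h : ∀ y ∈ G.neighborSet s \ {ℓ}, y = p.penultimate from
    fun y hy z hz => (h y hy).trans (h z hz).symm
  rintro y ⟨hsy, hyℓ⟩
  refine hG.eq_penultimate_of_dist_add_one hp (G.adj_symm hsy) ?_
  rcases hG.dist_eq_dist_add_one_of_adj_of_reachable r hsy hreach with h | h
  · exact h.symm
  · -- otherwise `y` would be a second leaf at maximal distance hanging from `s`
    obtain ⟨t, hyt, -⟩ := hG.neighborSet_eq_singleton_of_dist_max (r := r) (v := y)
      (by omega) (fun z => by have := hmax z; omega)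
    exact absurd ⟨ℓ, y, Ne.symm hyℓ, hsℓ, hsy, isLeaf_of_neighborSet_eq_singleton hℓs,
      isLeaf_of_neighborSet_eq_singleton hyt⟩ (hweak s)

theorem card_le_two_mul_indepNum [Finite V] (hG : G.IsAcyclic) :
    Nat.card V ≤ 2 * _root_.indepNum G := by
  let C := hG.coloringTwo
  have hindep :
      ∀ I : Set V, (∀ a ∈ I, ∀ b ∈ I, C a = C b) → I.ncard ≤ _root_.indepNum G := by
    refine fun I hI => le_csSup ⟨Nat.card V, ?_⟩
      ⟨I, fun a ha b hb hab => C.valid hab (hI a ha b hb), rfl⟩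
    rintro _ ⟨J, -, rfl⟩
    exact Set.ncard_le_card J
  have h₀ := hindep {v | C v = 0} (fun a ha b hb => ha.trans hb.symm)
  have h₁ := hindep {v | C v = 0}ᶜ (fun a ha b hb => by simp_all [Fin.eq_one_of_ne_zero])
  have hsum := Set.ncard_add_ncard_compl {v | C v = 0}
  omega

end SimpleGraph.IsAcyclic

theorem IsSwapPair.two_mul_ncard_le [Finite V] {G : SimpleGraph V} {D D' : Set V}
    (h : IsSwapPair G D D') : 2 * D.ncard ≤ Nat.card V := by
  obtain ⟨-, -, hdisj, f, -⟩ := h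
  have hcard : D.ncard = D'.ncard := by
    rw [← Nat.card_coe_set_eq, ← Nat.card_coe_set_eq, Nat.card_congr f]
  have hunion := Set.ncard_union_eq hdisj
  have hle := Set.ncard_le_card (D ∪ D')
  omega

/-- A swap pair recorded through its matching: `D` is the set of first and `D'` the set of second
coordinates. Domination is only required at non-isolated vertices, so that the notion survives
deleting all edges at a vertex. -/
structure IsSwapMatching (G : SimpleGraph V) (M : Set (V × V)) : Prop where
  adj : ∀ p ∈ M, G.Adj p.1 p.2
  injOn_fst : Set.InjOn Prod.fst M
  injOn_snd : Set.InjOn Prod.snd M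
  disjoint : Disjoint (Prod.fst '' M) (Prod.snd '' M)
  dominate_fst :
    ∀ v, v ∉ Prod.fst '' M → (∃ w, G.Adj v w) → ∃ a ∈ Prod.fst '' M, G.Adj a v
  dominate_snd :
    ∀ v, v ∉ Prod.snd '' M → (∃ w, G.Adj v w) → ∃ b ∈ Prod.snd '' M, G.Adj b v

namespace IsSwapMatching

variable {G G' : SimpleGraph V} {M : Set (V × V)}

theorem empty (h : ∀ v w, ¬ G.Adj v w) : IsSwapMatching G ∅ where
  adj := by simp
  injOn_fst := Set.injOn_empty _
  injOn_snd := Set.injOn_empty _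
  disjoint := by simp
  dominate_fst v _ := by simpa using h v
  dominate_snd v _ := by simpa using h v

theorem swap (hM : IsSwapMatching G M) : IsSwapMatching G (Prod.swap '' M) := by
  have hfst : Prod.fst '' (Prod.swap '' M) = Prod.snd '' M := by
    rw [Set.image_image]; rfl
  have hsnd : Prod.snd '' (Prod.swap '' M) = Prod.fst '' M := by
    rw [Set.image_image]; rfl
  refine ⟨?_, hM.injOn_snd.image_of_comp (f := Prod.swap),
    hM.injOn_fst.image_of_comp (f := Prod.swap), ?_, ?_, ?_⟩
  · rintro _ ⟨p, hp, rfl⟩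
    exact (hM.adj p hp).symm
  · rw [hfst, hsnd]
    exact hM.disjoint.symm
  · rw [hfst]
    exact hM.dominate_snd
  · rw [hsnd]
    exact hM.dominate_fst

theorem exists_adj_of_mem_fst (hM : IsSwapMatching G M) {v : V} (hv : v ∈ Prod.fst '' M) :
    ∃ w, G.Adj v w := by
  obtain ⟨p, hp, rfl⟩ := hv
  exact ⟨p.2, hM.adj p hp⟩

theorem exists_adj_of_mem_snd (hM : IsSwapMatching G M) {v : V} (hv : v ∈ Prod.snd '' M) :
    ∃ w, G.Adj v w :=
  hM.swap.exists_adj_of_mem_fst (by rwa [Set.image_image])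

theorem mem_fst_or_mem_snd (hM : IsSwapMatching G M) {x w : V} (hx : G.neighborSet x = {w}) :
    w ∈ Prod.fst '' M ∨ w ∈ Prod.snd '' M := by
  have hxw : G.Adj x w := adj_of_neighborSet_eq_singleton hx
  have hnbr : ∀ a, G.Adj a x → a = w := fun a ha =>
    eq_of_adj_of_neighborSet_eq_singleton hx (G.adj_symm ha)
  by_cases hxf : x ∈ Prod.fst '' M
  · obtain ⟨b, hb, hbx⟩ := hM.dominate_snd x (Set.disjoint_left.1 hM.disjoint hxf) ⟨w, hxw⟩
    exact Or.inr (hnbr b hbx ▸ hb)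
  · obtain ⟨a, ha, hax⟩ := hM.dominate_fst x hxf ⟨w, hxw⟩
    exact Or.inl (hnbr a hax ▸ ha)

theorem extend (hM : IsSwapMatching G' M) (hle : G' ≤ G) {s ℓ : V} (hsℓ : G.Adj s ℓ)
    (hs : ∀ y, ¬ G'.Adj s y) (hℓ : ∀ y, ¬ G'.Adj ℓ y)
    (hcover : ∀ v, v ≠ s → v ≠ ℓ → (∃ y, G.Adj v y) → (∀ y, ¬ G'.Adj v y) →
      (∃ a ∈ insert s (Prod.fst '' M), G.Adj a v) ∧
        ∃ b ∈ insert ℓ (Prod.snd '' M), G.Adj b v) :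
    IsSwapMatching G (insert (s, ℓ) M) := by
  have hsA : s ∉ Prod.fst '' M := fun h => (hM.exists_adj_of_mem_fst h).elim hs
  have hsB : s ∉ Prod.snd '' M := fun h => (hM.exists_adj_of_mem_snd h).elim hs
  have hℓA : ℓ ∉ Prod.fst '' M := fun h => (hM.exists_adj_of_mem_fst h).elim hℓ
  have hℓB : ℓ ∉ Prod.snd '' M := fun h => (hM.exists_adj_of_mem_snd h).elim hℓ
  have hmem : (s, ℓ) ∉ M := fun h => hsA ⟨_, h, rfl⟩
  refine ⟨?_, (Set.injOn_insert hmem).2 ⟨hM.injOn_fst, hsA⟩,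
    (Set.injOn_insert hmem).2 ⟨hM.injOn_snd, hℓB⟩, ?_, ?_, ?_⟩
  · rintro p (rfl | hp)
    exacts [hsℓ, hle (hM.adj p hp)]
  · rw [Set.image_insert_eq, Set.image_insert_eq, Set.disjoint_insert_left,
      Set.disjoint_insert_right]
    exact ⟨by simp [hsℓ.ne, hsB], hℓA, hM.disjoint⟩
  · simp only [Set.image_insert_eq]
    rintro v hv ⟨y, hy⟩
    rw [Set.mem_insert_iff, not_or] at hv
    by_cases hvℓ : v = ℓ
    · exact ⟨s, Set.mem_insert _ _, hvℓ ▸ hsℓ⟩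
    by_cases hv' : ∃ y, G'.Adj v y
    · obtain ⟨a, ha, hav⟩ := hM.dominate_fst v hv.2 hv'
      exact ⟨a, Set.mem_insert_of_mem _ ha, hle hav⟩
    · exact (hcover v hv.1 hvℓ ⟨y, hy⟩ (not_exists.1 hv')).1
  · simp only [Set.image_insert_eq]
    rintro v hv ⟨y, hy⟩
    rw [Set.mem_insert_iff, not_or] at hv
    by_cases hvs : v = s
    · exact ⟨ℓ, Set.mem_insert _ _, hvs ▸ hsℓ.symm⟩
    by_cases hv' : ∃ y, G'.Adj v y
    · obtain ⟨b, hb, hbv⟩ := hM.dominate_snd v hv.2 hv'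
      exact ⟨b, Set.mem_insert_of_mem _ hb, hle hbv⟩
    · exact (hcover v hvs hv.1 ⟨y, hy⟩ (not_exists.1 hv')).2

theorem isSwapPair (hM : IsSwapMatching G M) (hiso : ∀ v, ∃ w, G.Adj v w) :
    IsSwapPair G (Prod.fst '' M) (Prod.snd '' M) := by
  refine ⟨fun v hv => hM.dominate_fst v hv (hiso v), fun v hv => hM.dominate_snd v hv (hiso v),
    hM.disjoint, (Equiv.Set.imageOfInjOn _ M hM.injOn_fst).symm.trans
      (Equiv.Set.imageOfInjOn _ M hM.injOn_snd), fun x => ?_⟩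
  obtain ⟨p, rfl⟩ := (Equiv.Set.imageOfInjOn _ M hM.injOn_fst).surjective x
  simp only [Equiv.trans_apply, Equiv.symm_apply_apply]
  exact hM.adj p p.2

end IsSwapMatching

section PendantEdge

variable {G : SimpleGraph V} {ℓ s u w x : V}

theorem IsSwapMatching.of_deleteIncidenceSet {M : Set (V × V)} (hweak : IsWeakGraph G)
    (hℓ : G.neighborSet ℓ = {s}) (hM : IsSwapMatching (G.deleteIncidenceSet s) M) :
    IsSwapMatching G (insert (s, ℓ) M) := by
  have hsℓ : G.Adj s ℓ := (adj_of_neighborSet_eq_singleton hℓ).symm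
  refine hM.extend (G.deleteIncidenceSet_le s) hsℓ (by simp [deleteIncidenceSet_adj])
    (fun y hy => ?_) (fun v hvs hvℓ ⟨y, hy⟩ hiso => absurd ?_ (hweak s))
  · rw [deleteIncidenceSet_adj] at hy
    exact hy.2.2 (eq_of_adj_of_neighborSet_eq_singleton hℓ hy.1)
  · -- `v` lost all its neighbours, so its only neighbour was `s`: a second leaf at `s`
    have hnbr : ∀ z, G.Adj v z → z = s := fun z hz => by
      by_contra hzs
      exact hiso z (deleteIncidenceSet_adj.2 ⟨hz, hvs, hzs⟩)
    have hvs' : G.Adj v s := hnbr y hy ▸ hy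
    refine ⟨ℓ, v, Ne.symm hvℓ, hsℓ, hvs'.symm, isLeaf_of_neighborSet_eq_singleton hℓ,
      isLeaf_of_neighborSet_eq_singleton (Set.eq_singleton_iff_unique_mem.2 ⟨hvs', hnbr⟩)⟩

theorem exists_leaves_of_not_isWeakGraph_deleteIncidenceSet (hweak : IsWeakGraph G)
    (hℓ : G.neighborSet ℓ = {s}) (hs : (G.neighborSet s \ {ℓ}).Subsingleton)
    (hG' : ¬ IsWeakGraph (G.deleteIncidenceSet s)) :
    ∃ u w x, G.Adj s u ∧ u ≠ ℓ ∧ (G.deleteIncidenceSet s).neighborSet u = {w} ∧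
      G.neighborSet x = {w} ∧ x ≠ u := by
  simp only [IsWeakGraph, not_forall, not_not] at hG'
  obtain ⟨w, l₁, l₂, hne, h₁, h₂, hl₁, hl₂⟩ := hG'
  have hleaf : ∀ l, (G.deleteIncidenceSet s).Adj w l → IsLeaf (G.deleteIncidenceSet s) l →
      ¬ G.Adj s l → G.neighborSet l = {w} := fun l hl hleaf hsl => by
    rw [← neighborSet_deleteIncidenceSet_of_not_adj (deleteIncidenceSet_adj.1 hl).2.2
      (fun h => hsl h.symm)]
    exact neighborSet_eq_singleton_of_isLeaf hleaf hl.symm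
  wlog h₁s : G.Adj s l₁ generalizing l₁ l₂
  · by_cases h₂s : G.Adj s l₂
    · exact this l₂ l₁ hne.symm h₂ h₁ hl₂ hl₁ h₂s
    · exact absurd ⟨l₁, l₂, hne, (deleteIncidenceSet_adj.1 h₁).1,
        (deleteIncidenceSet_adj.1 h₂).1,
        isLeaf_of_neighborSet_eq_singleton (hleaf l₁ h₁ hl₁ h₁s),
        isLeaf_of_neighborSet_eq_singleton (hleaf l₂ h₂ hl₂ h₂s)⟩ (hweak w)
  have hne_ℓ : ∀ l, (G.deleteIncidenceSet s).Adj w l → l ≠ ℓ := by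
    rintro l hl rfl
    rw [deleteIncidenceSet_adj] at hl
    exact hl.2.1 (eq_of_adj_of_neighborSet_eq_singleton hℓ hl.1.symm)
  refine ⟨l₁, w, l₂, h₁s, hne_ℓ l₁ h₁,
    neighborSet_eq_singleton_of_isLeaf hl₁ h₁.symm,
    hleaf l₂ h₂ hl₂ fun h₂s => hne ?_, hne.symm⟩
  exact hs ⟨h₁s, hne_ℓ l₁ h₁⟩ ⟨h₂s, hne_ℓ l₂ h₂⟩

theorem neighborSet_deleteIncidenceSet_deleteIncidenceSet_of_eq_singleton
    (hsu : G.Adj s u) (hu : (G.deleteIncidenceSet s).neighborSet u = {w})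
    (hx : G.neighborSet x = {w}) (hxu : x ≠ u) :
    ((G.deleteIncidenceSet s).deleteIncidenceSet u).neighborSet x = {w} := by
  have huw : (G.deleteIncidenceSet s).Adj u w := adj_of_neighborSet_eq_singleton hu
  have hxs : x ≠ s := by
    rintro rfl
    exact huw.ne (eq_of_adj_of_neighborSet_eq_singleton hx hsu)
  exact neighborSet_deleteIncidenceSet_of_eq_singleton
    (neighborSet_deleteIncidenceSet_of_eq_singleton hx hxs (deleteIncidenceSet_adj.1 huw).2.2)
    hxu huw.ne'

theorem isWeakGraph_deleteIncidenceSet_deleteIncidenceSet (hweak : IsWeakGraph G)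
    (hℓ : G.neighborSet ℓ = {s}) (hs : (G.neighborSet s \ {ℓ}).Subsingleton)
    (hsu : G.Adj s u) (huℓ : u ≠ ℓ) (hu : (G.deleteIncidenceSet s).neighborSet u = {w})
    (hx : G.neighborSet x = {w}) (hxu : x ≠ u) :
    IsWeakGraph ((G.deleteIncidenceSet s).deleteIncidenceSet u) := by
  have hx'' := neighborSet_deleteIncidenceSet_deleteIncidenceSet_of_eq_singleton hsu hu hx hxu
  have hNu : G.neighborSet u = {s, w} := by
    rw [← insert_neighborSet_deleteIncidenceSet hsu.symm, hu]
  refine hweak.anti ((deleteIncidenceSet_le _ _).trans (deleteIncidenceSet_le _ _))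
    fun v y hvy => ?_
  have hv := adj_of_neighborSet_eq_singleton hvy
  simp only [deleteIncidenceSet_adj] at hv
  obtain ⟨⟨hvy', hvs, hys⟩, hvu, hyu⟩ := hv
  by_cases hvw : v = w
  · -- the other leaf `x` at `w` is now the unique neighbour of `w`
    subst hvw
    rw [← eq_of_adj_of_neighborSet_eq_singleton hvy (adj_of_neighborSet_eq_singleton hx'').symm]
    exact Or.inr (isLeaf_of_neighborSet_eq_singleton hx'')
  refine Or.inl (isLeaf_of_neighborSet_eq_singleton (w := y) ?_)
  rw [← hvy, neighborSet_deleteIncidenceSet_of_not_adj hvu,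
    neighborSet_deleteIncidenceSet_of_not_adj hvs]
  · intro hvs'
    have hvℓ : v ≠ ℓ := by
      rintro rfl
      exact hys (eq_of_adj_of_neighborSet_eq_singleton hℓ hvy')
    exact hvu (hs ⟨hvs'.symm, hvℓ⟩ ⟨hsu, huℓ⟩)
  · intro hvu'
    have hv : v ∈ G.neighborSet u := (deleteIncidenceSet_adj.1 hvu').1.symm
    rw [hNu] at hv
    rcases hv with rfl | rfl
    exacts [hvs rfl, hvw rfl]

theorem exists_isSwapMatching_of_deleteIncidenceSet_deleteIncidenceSet
    (hℓ : G.neighborSet ℓ = {s}) (hs : (G.neighborSet s \ {ℓ}).Subsingleton)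
    (hsu : G.Adj s u) (huℓ : u ≠ ℓ) (hu : (G.deleteIncidenceSet s).neighborSet u = {w})
    (hx : G.neighborSet x = {w}) (hxu : x ≠ u) {M : Set (V × V)}
    (hM : IsSwapMatching ((G.deleteIncidenceSet s).deleteIncidenceSet u) M) :
    ∃ M, IsSwapMatching G M := by
  have hx'' := neighborSet_deleteIncidenceSet_deleteIncidenceSet_of_eq_singleton hsu hu hx hxu
  wlog hwB : w ∈ Prod.snd '' M generalizing M
  · refine this hM.swap ?_
    rw [Set.image_image]
    exact (hM.mem_fst_or_mem_snd hx'').resolve_right hwB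
  have hNu : G.neighborSet u = {s, w} := by
    rw [← insert_neighborSet_deleteIncidenceSet hsu.symm, hu]
  have hsℓ : G.Adj s ℓ := (adj_of_neighborSet_eq_singleton hℓ).symm
  refine ⟨_, hM.extend ((deleteIncidenceSet_le _ _).trans (deleteIncidenceSet_le _ _)) hsℓ
    (by simp [deleteIncidenceSet_adj]) (fun y hy => ?_) (fun v hvs hvℓ ⟨z, hz⟩ hiso => ?_)⟩
  · simp only [deleteIncidenceSet_adj] at hy
    exact hy.1.2.2 (eq_of_adj_of_neighborSet_eq_singleton hℓ hy.1.1)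
  -- `u` is the only vertex that is isolated in the smaller graph but not in `G`
  obtain rfl : v = u := by
    by_contra hvu
    by_cases hzs : z = s
    · exact hvu (hs ⟨hzs ▸ hz.symm, hvℓ⟩ ⟨hsu, huℓ⟩)
    by_cases hzu : z = u
    · have hv : v ∈ G.neighborSet u := hzu ▸ hz.symm
      rw [hNu] at hv
      rcases hv with rfl | rfl
      exacts [hvs rfl, hiso x (adj_of_neighborSet_eq_singleton hx'').symm]
    exact hiso z (by simp [deleteIncidenceSet_adj, hz, hzs, hzu, hvs, hvu])
  exact ⟨⟨s, Set.mem_insert _ _, hsu⟩, ⟨w, Set.mem_insert_of_mem _ hwB,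
    (deleteIncidenceSet_adj.1 (adj_of_neighborSet_eq_singleton hu)).1.symm⟩⟩

end PendantEdge

theorem SimpleGraph.IsAcyclic.exists_isSwapMatching [Finite V] {G : SimpleGraph V}
    (hG : G.IsAcyclic) (hweak : IsWeakGraph G) : ∃ M, IsSwapMatching G M := by
  induction G using WellFoundedLT.induction with
  | _ G ih =>
  by_cases hE : ∃ r w, G.Adj r w
  swap
  · simp only [not_exists] at hE
    exact ⟨∅, .empty hE⟩
  obtain ⟨r, w, hrw⟩ := hE
  obtain ⟨ℓ, s, hℓ, hs⟩ := hG.exists_pendant_s6 hweak hrw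
  have hlt : G.deleteIncidenceSet s < G := by
    refine (deleteIncidenceSet_le _ _).lt_of_ne fun h => ?_
    have hsℓ := (adj_of_neighborSet_eq_singleton hℓ).symm
    rw [← h, deleteIncidenceSet_adj] at hsℓ
    exact hsℓ.2.1 rfl
  by_cases hG' : IsWeakGraph (G.deleteIncidenceSet s)
  · obtain ⟨M, hM⟩ := ih _ hlt (hG.anti (deleteIncidenceSet_le _ _)) hG'
    exact ⟨_, hM.of_deleteIncidenceSet hweak hℓ⟩
  obtain ⟨u, w, x, hsu, huℓ, hu, hx, hxu⟩ :=
    exists_leaves_of_not_isWeakGraph_deleteIncidenceSet hweak hℓ hs hG'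
  obtain ⟨M, hM⟩ := ih _ ((deleteIncidenceSet_le _ _).trans_lt hlt)
    (hG.anti ((deleteIncidenceSet_le _ _).trans (deleteIncidenceSet_le _ _)))
    (isWeakGraph_deleteIncidenceSet_deleteIncidenceSet hweak hℓ hs hsu huℓ hu hx hxu)
  exact
    exists_isSwapMatching_of_deleteIncidenceSet_deleteIncidenceSet hℓ hs hsu huℓ hu hx hxu hM

theorem stmt_6 {V : Type*} [Fintype V] (T : SimpleGraph V) (hT : T.IsTree)
    (hnt : 2 ≤ Fintype.card V) (hweak : IsWeakGraph T) :
    DDm T ≤ (_root_.indepNum T : ℕ∞) := by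
  have : Nontrivial V := Fintype.one_lt_card_iff_nontrivial.1 hnt
  obtain ⟨M, hM⟩ := hT.isAcyclic.exists_isSwapMatching hweak
  have hiso : ∀ v, ∃ w, T.Adj v w := fun v => by
    obtain ⟨y, hy⟩ := exists_ne v
    obtain ⟨p⟩ := hT.connected v y
    exact ⟨_, p.adj_snd (Walk.not_nil_of_ne hy.symm)⟩
  have hpair := hM.isSwapPair hiso
  have hD := hpair.two_mul_ncard_le
  have hα := hT.isAcyclic.card_le_two_mul_indepNum
  calc DDm T ≤ (Prod.fst '' M).ncard := sInf_le ⟨_, _, hpair, rfl⟩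
    _ ≤ _root_.indepNum T := by exact_mod_cast (by omega)
end

section
/- For any graphs G and H each having at least two vertices, the Cartesian product G □ H has a pair of disjoint dominating sets with a perfect matching between them (i.e., DD_m(G □ H) is finite), regardless of whether G or H individually have such pairs. -/
open SimpleGraph

variable {V : Type*}

/-!
Orient maximal matchings of `G` and `H`, from tails `U` to heads `U'` and from `X` to `Y`, and let
`Z` be the set of vertices of `G` not dominated by `U`; by maximality all neighbours of a vertex
of `Z` are heads. Let `D(X, Y)` consist of the columns of `X` off the rows of `Z`, the columns of
`Y` on the rows of `Z`, and, on the columns not dominated by `X` (resp. `Y`), the rows of `U`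
(resp. `U'`). Then `D(X, Y)` dominates `G □ H`, and so does `D(Y, X)`, obtained by reversing the
orientation in `H`. The two sets are disjoint, and are matched to each other by moving a vertex
along the `H`-matching edge of its column if there is one, and along the `G`-matching edge of its
row otherwise.
-/

open Function

namespace SimpleGraph

/-- The matching consists of the edges `{v, m v}` with `m v ≠ v`, each oriented from its end in
`A` to its end in `B`. -/
structure IsOrientedMaximalMatching (G : SimpleGraph V) (m : V → V) (A B : Set V) : Prop where
  involutive : Involutive m
  adj : ∀ v, m v ≠ v → G.Adj v (m v)
  disjoint : Disjoint A B
  mem_left_iff : ∀ v, v ∈ A ↔ m v ∈ B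
  mem_or_mem : ∀ v, m v ≠ v → v ∈ A ∨ v ∈ B
  maximal : ∀ v w, m v = v → m w = w → ¬G.Adj v w

def undominated (G : SimpleGraph V) (A : Set V) : Set V :=
  {v | v ∉ A ∧ ∀ a ∈ A, ¬G.Adj a v}

namespace IsOrientedMaximalMatching

variable {G : SimpleGraph V} {m : V → V} {A B : Set V} {v w : V}

theorem symm (h : G.IsOrientedMaximalMatching m A B) : G.IsOrientedMaximalMatching m B A where
  involutive := h.involutive
  adj := h.adj
  disjoint := h.disjoint.symm
  mem_left_iff v := by simpa only [h.involutive v] using (h.mem_left_iff (m v)).symm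
  mem_or_mem v hv := (h.mem_or_mem v hv).symm
  maximal := h.maximal

theorem map_mem_right (h : G.IsOrientedMaximalMatching m A B) (hv : v ∈ A) : m v ∈ B :=
  (h.mem_left_iff v).1 hv

theorem map_ne_of_mem_left (h : G.IsOrientedMaximalMatching m A B) (hv : v ∈ A) : m v ≠ v :=
  fun hmv => Set.disjoint_left.1 h.disjoint hv (hmv ▸ h.map_mem_right hv)

theorem adj_of_mem_left (h : G.IsOrientedMaximalMatching m A B) (hv : v ∈ A) : G.Adj v (m v) :=
  h.adj v (h.map_ne_of_mem_left hv)

theorem map_eq_self (h : G.IsOrientedMaximalMatching m A B) (hA : v ∉ A) (hB : v ∉ B) :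
    m v = v := by
  by_contra hv
  exact (h.mem_or_mem v hv).elim hA hB

theorem notMem_right_of_mem_undominated (h : G.IsOrientedMaximalMatching m A B)
    (hv : v ∈ G.undominated A) : v ∉ B :=
  fun hB => hv.2 (m v) (h.symm.map_mem_right hB) (h.symm.adj_of_mem_left hB).symm

theorem map_eq_self_of_mem_undominated (h : G.IsOrientedMaximalMatching m A B)
    (hv : v ∈ G.undominated A) : m v = v :=
  h.map_eq_self hv.1 (h.notMem_right_of_mem_undominated hv)

theorem mem_right_of_mem_undominated_of_adj (h : G.IsOrientedMaximalMatching m A B)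
    (hv : v ∈ G.undominated A) (hvw : G.Adj v w) : w ∈ B := by
  by_contra hw
  have hwA : w ∉ A := fun hwA => hv.2 w hwA hvw.symm
  exact h.maximal v w (h.map_eq_self_of_mem_undominated hv) (h.map_eq_self hwA hw) hvw

theorem disjoint_undominated (h : G.IsOrientedMaximalMatching m A B)
    (hG : ∀ v, ∃ w, G.Adj v w) : Disjoint (G.undominated A) (G.undominated B) := by
  refine Set.disjoint_left.2 fun v hA hB => ?_
  obtain ⟨w, hvw⟩ := hG v
  exact Set.disjoint_left.1 h.disjoint (h.symm.mem_right_of_mem_undominated_of_adj hB hvw)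
    (h.mem_right_of_mem_undominated_of_adj hA hvw)

end IsOrientedMaximalMatching

theorem exists_maximal_isMatching [Finite V] (G : SimpleGraph V) :
    ∃ M : G.Subgraph, M.IsMatching ∧ ∀ v w, v ∉ M.verts → w ∉ M.verts → ¬G.Adj v w := by
  obtain ⟨M, hM, hmax⟩ := (Set.toFinite {M : G.Subgraph | M.IsMatching}).exists_maximal
    ⟨⊥, fun _ hv => hv.elim⟩
  refine ⟨M, hM, fun v w hv hw hvw => hv ?_⟩
  have hsup : (M ⊔ G.subgraphOfAdj hvw).IsMatching :=
    hM.sup (.subgraphOfAdj hvw) (by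
      rw [hM.support_eq_verts, support_subgraphOfAdj]
      simp [hv, hw])
  exact (le_sup_right.trans (hmax hsup le_sup_left)).1 (by simp)

theorem exists_involutive_maximal_matching [Finite V] (G : SimpleGraph V) :
    ∃ m : V → V, Involutive m ∧ (∀ v, m v ≠ v → G.Adj v (m v)) ∧
      ∀ v w, m v = v → m w = w → ¬G.Adj v w := by
  classical
  obtain ⟨M, hM, hmax⟩ := exists_maximal_isMatching G
  let m v := if hv : v ∈ M.verts then (hM hv).choose else v
  have hm : ∀ v ∈ M.verts, M.Adj v (m v) := fun v hv => by
    simpa only [m, dif_pos hv] using (hM hv).choose_spec.1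
  have hfix : ∀ v ∉ M.verts, m v = v := fun v hv => dif_neg hv
  have hmem : ∀ v, m v = v → v ∉ M.verts := fun v hv hvM => (hm v hvM).ne hv.symm
  refine ⟨m, fun v => ?_, fun v hv => ?_, fun v w hv hw => hmax v w (hmem v hv) (hmem w hw)⟩
  · by_cases hvM : v ∈ M.verts
    · exact hM.eq_of_adj_left (hm _ (hm v hvM).snd_mem) (hm v hvM).symm
    · rw [hfix v hvM, hfix v hvM]
  · by_cases hvM : v ∈ M.verts
    · exact (hm v hvM).adj_sub
    · exact absurd (hfix v hvM) hv

theorem exists_isOrientedMaximalMatching [Finite V] (G : SimpleGraph V) :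
    ∃ m A B, G.IsOrientedMaximalMatching m A B := by
  obtain ⟨m, hinv, hadj, hmax⟩ := exists_involutive_maximal_matching G
  let _ : LinearOrder V := WellOrderingRel.isWellOrder.linearOrder
  refine ⟨m, {v | v < m v}, {v | m v < v}, hinv, hadj,
    Set.disjoint_left.2 fun _ h₁ h₂ => lt_asymm (α := V) h₁ h₂, fun v => ?_,
    fun v hv => hv.symm.lt_or_gt, hmax⟩
  change v < m v ↔ m (m v) < m v
  rw [hinv v]

section BoxProd

variable {W : Type*} {G : SimpleGraph V} {H : SimpleGraph W}

def boxProdSwapSet (G : SimpleGraph V) (H : SimpleGraph W) (U U' : Set V) (X Y : Set W) :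
    Set (V × W) :=
  {p | (p.1 ∉ G.undominated U ∧ p.2 ∈ X) ∨ (p.1 ∈ G.undominated U ∧ p.2 ∈ Y) ∨
    (p.1 ∈ U ∧ p.2 ∈ H.undominated X) ∨ (p.1 ∈ U' ∧ p.2 ∈ H.undominated Y)}

open Classical in
noncomputable def boxProdSwap (mG : V → V) (mH : W → W) (p : V × W) : V × W :=
  if mH p.2 = p.2 then (mG p.1, p.2) else (p.1, mH p.2)

variable {mG : V → V} {mH : W → W} {U U' : Set V} {X Y : Set W}

theorem boxProdSwap_of_eq (a : V) {b : W} (hb : mH b = b) :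
    boxProdSwap mG mH (a, b) = (mG a, b) :=
  if_pos hb

theorem boxProdSwap_of_ne (a : V) {b : W} (hb : mH b ≠ b) :
    boxProdSwap mG mH (a, b) = (a, mH b) :=
  if_neg hb

theorem boxProdSwap_involutive (hG : Involutive mG) (hH : Involutive mH) :
    Involutive (boxProdSwap mG mH) := by
  rintro ⟨a, b⟩
  by_cases hb : mH b = b
  · rw [boxProdSwap_of_eq a hb, boxProdSwap_of_eq _ hb, hG a]
  · have hb' : mH (mH b) ≠ mH b := by rw [hH b]; exact Ne.symm hb
    rw [boxProdSwap_of_ne a hb, boxProdSwap_of_ne a hb', hH b]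

theorem boxProdSwap_adj (hG : ∀ v, mG v ≠ v → G.Adj v (mG v))
    (hH : ∀ w, mH w ≠ w → H.Adj w (mH w)) (p : V × W) (hp : boxProdSwap mG mH p ≠ p) :
    (G □ H).Adj p (boxProdSwap mG mH p) := by
  obtain ⟨a, b⟩ := p
  by_cases hb : mH b = b
  · rw [boxProdSwap_of_eq a hb] at hp ⊢
    exact boxProd_adj_left.2 (hG a fun ha => hp (by rw [ha]))
  · rw [boxProdSwap_of_ne a hb]
    exact boxProd_adj_right.2 (hH b hb)

theorem isDomSet_boxProdSwapSet (hGadj : ∀ v, ∃ w, G.Adj v w)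
    (hMG : G.IsOrientedMaximalMatching mG U U') (X Y : Set W) :
    IsDomSet (G □ H) (boxProdSwapSet G H U U' X Y) := by
  rintro ⟨a, b⟩ hab
  by_cases ha : a ∈ G.undominated U
  · by_cases hb : ∃ y ∈ Y, H.Adj y b
    · obtain ⟨y, hy, hyb⟩ := hb
      exact ⟨(a, y), Or.inr (Or.inl ⟨ha, hy⟩), boxProd_adj_right.2 hyb⟩
    · push Not at hb
      obtain ⟨c, hac⟩ := hGadj a
      have hbY : b ∈ H.undominated Y := ⟨fun hbY => hab (Or.inr (Or.inl ⟨ha, hbY⟩)), hb⟩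
      exact ⟨(c, b), Or.inr (Or.inr (Or.inr
        ⟨hMG.mem_right_of_mem_undominated_of_adj ha hac, hbY⟩)), boxProd_adj_left.2 hac.symm⟩
  · by_cases hb : ∃ x ∈ X, H.Adj x b
    · obtain ⟨x, hx, hxb⟩ := hb
      exact ⟨(a, x), Or.inl ⟨ha, hx⟩, boxProd_adj_right.2 hxb⟩
    · push Not at hb
      have hbX : b ∈ H.undominated X := ⟨fun hbX => hab (Or.inl ⟨ha, hbX⟩), hb⟩
      obtain ⟨u, hu, hua⟩ : ∃ u ∈ U, G.Adj u a := by
        by_contra! h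
        exact ha ⟨fun haU => hab (Or.inr (Or.inr (Or.inl ⟨haU, hbX⟩))), h⟩
      exact ⟨(u, b), Or.inr (Or.inr (Or.inl ⟨hu, hbX⟩)), boxProd_adj_left.2 hua⟩

theorem disjoint_boxProdSwapSet (hHadj : ∀ w, ∃ w', H.Adj w w')
    (hMG : G.IsOrientedMaximalMatching mG U U') (hMH : H.IsOrientedMaximalMatching mH X Y) :
    Disjoint (boxProdSwapSet G H U U' X Y) (boxProdSwapSet G H U U' Y X) := by
  refine Set.disjoint_left.2 fun ⟨a, b⟩ h₁ h₂ => ?_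
  have hUU' : a ∈ U → a ∉ U' := fun h => Set.disjoint_left.1 hMG.disjoint h
  have hXY : b ∈ X → b ∉ Y := fun h => Set.disjoint_left.1 hMH.disjoint h
  have hYZ : b ∈ H.undominated X → b ∉ Y := hMH.notMem_right_of_mem_undominated
  have hXZ : b ∈ H.undominated Y → b ∉ X := hMH.symm.notMem_right_of_mem_undominated
  have hXX : b ∈ H.undominated X → b ∉ X := And.left
  have hYY : b ∈ H.undominated Y → b ∉ Y := And.left
  have hZZ : b ∈ H.undominated X → b ∉ H.undominated Y := fun h =>
    Set.disjoint_left.1 (hMH.disjoint_undominated hHadj) h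
  rcases h₁ with ⟨h₁a, h₁b⟩ | ⟨h₁a, h₁b⟩ | ⟨h₁a, h₁b⟩ | ⟨h₁a, h₁b⟩ <;>
    rcases h₂ with ⟨h₂a, h₂b⟩ | ⟨h₂a, h₂b⟩ | ⟨h₂a, h₂b⟩ | ⟨h₂a, h₂b⟩ <;>
    tauto

theorem boxProdSwap_mem_boxProdSwapSet (hMG : G.IsOrientedMaximalMatching mG U U')
    (hMH : H.IsOrientedMaximalMatching mH X Y) {p : V × W}
    (hp : p ∈ boxProdSwapSet G H U U' X Y) :
    boxProdSwap mG mH p ∈ boxProdSwapSet G H U U' Y X := by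
  obtain ⟨a, b⟩ := p
  rcases hp with ⟨ha, hb⟩ | ⟨ha, hb⟩ | ⟨ha, hb⟩ | ⟨ha, hb⟩
  · rw [boxProdSwap_of_ne a (hMH.map_ne_of_mem_left hb)]
    exact Or.inl ⟨ha, hMH.map_mem_right hb⟩
  · rw [boxProdSwap_of_ne a (hMH.symm.map_ne_of_mem_left hb)]
    exact Or.inr (Or.inl ⟨ha, hMH.symm.map_mem_right hb⟩)
  · rw [boxProdSwap_of_eq a (hMH.map_eq_self_of_mem_undominated hb)]
    exact Or.inr (Or.inr (Or.inr ⟨hMG.map_mem_right ha, hb⟩))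
  · rw [boxProdSwap_of_eq a (hMH.symm.map_eq_self_of_mem_undominated hb)]
    exact Or.inr (Or.inr (Or.inl ⟨hMG.symm.map_mem_right ha, hb⟩))

end BoxProd

end SimpleGraph

theorem isSwapPair_of_involutive {G : SimpleGraph V} {D D' : Set V} (hD : IsDomSet G D)
    (hD' : IsDomSet G D') (hDD' : Disjoint D D') {f : V → V} (hf : Involutive f)
    (hmaps : ∀ x ∈ D, f x ∈ D') (hmaps' : ∀ x ∈ D', f x ∈ D)
    (hadj : ∀ x, f x ≠ x → G.Adj x (f x)) : IsSwapPair G D D' :=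
  ⟨hD, hD', hDD', ⟨fun x => ⟨f x, hmaps x x.2⟩, fun y => ⟨f y, hmaps' y y.2⟩,
    fun x => Subtype.ext (hf x), fun y => Subtype.ext (hf y)⟩,
    fun x => hadj x fun hx => Set.disjoint_left.1 hDD' x.2 (hx ▸ hmaps x x.2)⟩

theorem stmt_14 {V W : Type*} [Fintype V] [Fintype W]
    (G : SimpleGraph V) (H : SimpleGraph W)
    (hG : G.Connected) (hH : H.Connected)
    (hV : 2 ≤ Fintype.card V) (hW : 2 ≤ Fintype.card W) :
    ∃ D D', IsSwapPair (G.boxProd H) D D' := by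
  have : Nontrivial V := Fintype.one_lt_card_iff_nontrivial.1 hV
  have : Nontrivial W := Fintype.one_lt_card_iff_nontrivial.1 hW
  have hGadj := hG.preconnected.exists_adj_of_nontrivial
  have hHadj := hH.preconnected.exists_adj_of_nontrivial
  obtain ⟨mG, U, U', hMG⟩ := G.exists_isOrientedMaximalMatching
  obtain ⟨mH, X, Y, hMH⟩ := H.exists_isOrientedMaximalMatching
  exact ⟨_, _, isSwapPair_of_involutive (isDomSet_boxProdSwapSet hGadj hMG X Y)
    (isDomSet_boxProdSwapSet hGadj hMG Y X) (disjoint_boxProdSwapSet hHadj hMG hMH)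
    (boxProdSwap_involutive hMG.involutive hMH.involutive)
    (fun _ => boxProdSwap_mem_boxProdSwapSet hMG hMH)
    (fun _ => boxProdSwap_mem_boxProdSwapSet hMG hMH.symm) (boxProdSwap_adj hMG.adj hMH.adj)⟩
end
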